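/- arXiv:1601.05128 — 10 statements merged into one kernel-verified Lean document; each statement's English description precedes it below -/
import Mathlib

section
/- Assume n ≥ 2 and that the star subdivision at v = (1/r)(a_1, …, a_n) is good. Then for every c ∈ ℤ^n and every index j ∈ {1, …, n}, there exist an index i ∈ {1, …, n} and m ∈ ℤ^n such that φ_k(m) = c and φ_k(m + e_i) = c + e_j. (Multiplicatively: for any monomial 𝐤 of the lattice M_k and any degree one monomial ξ_j, there exist a variable x_i and a Laurent monomial 𝐦 with φ_k(x_i·𝐦) = ξ_j·𝐤 and φ_k(𝐦) = 𝐤.) -/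
open scoped BigOperators

/-- The `k`-th round down function of the star subdivision at `v = (1/r)(a 1, …, a n)`. -/
def roundDown (n : ℕ) (r : ℕ) (a : Fin n → ℕ) (k : Fin n) (m : Fin n → ℤ) :
    Fin n → ℤ :=
  Function.update m k (Int.fdiv (∑ j, (a j : ℤ) * m j) (r : ℤ))

lemma fdiv_aux (r q s : ℤ) (hr : 0 < r) (hs : 0 ≤ s) (hsr : s < r) :
    (r * q + s).fdiv r = q := by
  rw [Int.fdiv_eq_ediv_of_nonneg _ hr.le, add_comm, Int.add_mul_ediv_left s q hr.ne',
    Int.ediv_eq_zero_of_lt hs hsr, zero_add]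

lemma sum_update_aux (n : ℕ) (a : Fin n → ℕ) (c : Fin n → ℤ) (k : Fin n) (t : ℤ) :
    ∑ l, (a l : ℤ) * (Function.update c k t) l
      = (a k : ℤ) * t + ∑ l ∈ Finset.univ \ {k}, (a l : ℤ) * c l := by
  have h : (fun l => (a l : ℤ) * Function.update c k t l)
      = Function.update (fun l => (a l : ℤ) * c l) k ((a k : ℤ) * t) := by
    funext l
    rcases eq_or_ne l k with rfl | h
    · simp
    · simp [Function.update_of_ne h]
  rw [h]
  exact Finset.sum_update_of_mem (Finset.mem_univ k) _ _

lemma sum_single_aux (n : ℕ) (a : Fin n → ℕ) (i : Fin n) :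
    ∑ l, (a l : ℤ) * (Pi.single i 1 : Fin n → ℤ) l = (a i : ℤ) := by
  simp [Pi.single_apply, mul_ite, Finset.sum_ite_eq']

/-- If `n ≥ 2` and the star subdivision at `v = (1/r)(a 1, …, a n)` is good
(`a i + a j ≤ r` for all `i ≠ j`), then for every `c ∈ ℤⁿ` and every index `j`
there exist an index `i` and `m ∈ ℤⁿ` with `φ_k(m) = c` and `φ_k(m + e_i) = c + e_j`. -/
theorem stmt_5 (n : ℕ) (hn : 2 ≤ n) (r : ℕ) (hr : 1 ≤ r) (a : Fin n → ℕ)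
    (ha : ∀ j, 0 < a j) (k : Fin n)
    (hgood : ∀ i j : Fin n, i ≠ j → a i + a j ≤ r)
    (c : Fin n → ℤ) (j : Fin n) :
    ∃ (i : Fin n) (m : Fin n → ℤ),
      roundDown n r a k m = c ∧
      roundDown n r a k (m + Pi.single i 1) = c + Pi.single j 1 := by
  have hr' : (0 : ℤ) < (r : ℤ) := by exact_mod_cast hr
  have hak : (0 : ℤ) < (a k : ℤ) := by exact_mod_cast ha k
  have : Nontrivial (Fin n) := by
    have : 1 < n := hn
    exact Fin.nontrivial_iff_two_le.mpr hn
  obtain ⟨j', hj'⟩ := exists_ne k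
  have hakr : (a k : ℤ) ≤ (r : ℤ) := by
    have h1 := hgood k j' (Ne.symm hj')
    have h2 := ha j'
    exact_mod_cast Nat.le_trans (Nat.le_add_right _ _) h1
  set S0 : ℤ := ∑ l ∈ Finset.univ \ {k}, (a l : ℤ) * c l with hS0
  rcases eq_or_ne j k with rfl | hjk
  · -- case j = k : take i = k
    set ρ : ℤ := (S0 - (r : ℤ) * c j - ((r : ℤ) - (a j : ℤ))) % (a j : ℤ) with hρdef
    set t : ℤ := -((S0 - (r : ℤ) * c j - ((r : ℤ) - (a j : ℤ))) / (a j : ℤ)) with htdef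
    have hρ0 : 0 ≤ ρ := Int.emod_nonneg _ hak.ne'
    have hρ : ρ < (a j : ℤ) := Int.emod_lt_of_pos _ hak
    have hsum : (a j : ℤ) * t + S0 = (r : ℤ) * c j + (((r : ℤ) - (a j : ℤ)) + ρ) := by
      have h := Int.mul_ediv_add_emod (S0 - (r : ℤ) * c j - ((r : ℤ) - (a j : ℤ))) (a j : ℤ)
      have ht : (a j : ℤ) * t
          = -((a j : ℤ) * ((S0 - (r : ℤ) * c j - ((r : ℤ) - (a j : ℤ))) / (a j : ℤ))) := by
        rw [htdef]; ring
      linarith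
    set m : Fin n → ℤ := Function.update c j t with hm
    have hS : ∑ l, (a l : ℤ) * m l = (r : ℤ) * c j + (((r : ℤ) - (a j : ℤ)) + ρ) := by
      rw [hm, sum_update_aux, ← hS0, hsum]
    have key1 : Int.fdiv (∑ l, (a l : ℤ) * m l) (r : ℤ) = c j := by
      rw [hS]
      exact fdiv_aux _ _ _ hr' (by linarith) (by linarith)
    have hS' : ∑ l, (a l : ℤ) * ((m + Pi.single j 1 : Fin n → ℤ)) l = (r : ℤ) * (c j + 1) + ρ := by
      simp only [Pi.add_apply, mul_add, Finset.sum_add_distrib]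
      rw [hS, sum_single_aux]
      ring
    have key2 : Int.fdiv (∑ l, (a l : ℤ) * ((m + Pi.single j 1 : Fin n → ℤ)) l) (r : ℤ) = c j + 1 := by
      rw [hS']
      exact fdiv_aux _ _ _ hr' hρ0 (by linarith)
    refine ⟨j, m, ?_, ?_⟩
    · funext l
      rcases eq_or_ne l j with rfl | hl
      · simp only [roundDown]
        rw [Function.update_self, key1]
      · simp only [roundDown]
        rw [Function.update_of_ne hl, hm, Function.update_of_ne hl]
    · funext l
      rcases eq_or_ne l j with rfl | hl
      · simp only [roundDown]
        rw [Function.update_self, key2]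
        simp
      · simp only [roundDown]
        rw [Function.update_of_ne hl]
        simp only [Pi.add_apply, hm, Function.update_of_ne hl,
          Pi.single_eq_of_ne hl]
  · -- case j ≠ k : take i = j
    have hgkj : (a k : ℤ) + (a j : ℤ) ≤ (r : ℤ) := by
      exact_mod_cast hgood k j (Ne.symm hjk)
    have haj : (0 : ℤ) < (a j : ℤ) := by exact_mod_cast ha j
    set ρ : ℤ := (S0 - (r : ℤ) * c k) % (a k : ℤ) with hρdef
    set t : ℤ := -((S0 - (r : ℤ) * c k) / (a k : ℤ)) with htdef
    have hρ0 : 0 ≤ ρ := Int.emod_nonneg _ hak.ne'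
    have hρ : ρ < (a k : ℤ) := Int.emod_lt_of_pos _ hak
    have hsum : (a k : ℤ) * t + S0 = (r : ℤ) * c k + ρ := by
      have h := Int.mul_ediv_add_emod (S0 - (r : ℤ) * c k) (a k : ℤ)
      have ht : (a k : ℤ) * t
          = -((a k : ℤ) * ((S0 - (r : ℤ) * c k) / (a k : ℤ))) := by
        rw [htdef]; ring
      linarith
    set m : Fin n → ℤ := Function.update c k t with hm
    have hS : ∑ l, (a l : ℤ) * m l = (r : ℤ) * c k + ρ := by
      rw [hm, sum_update_aux, ← hS0, hsum]
    have key1 : Int.fdiv (∑ l, (a l : ℤ) * m l) (r : ℤ) = c k := by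
      rw [hS]
      exact fdiv_aux _ _ _ hr' hρ0 (by linarith)
    have hS' : ∑ l, (a l : ℤ) * ((m + Pi.single j 1 : Fin n → ℤ)) l = (r : ℤ) * c k + (ρ + (a j : ℤ)) := by
      simp only [Pi.add_apply, mul_add, Finset.sum_add_distrib]
      rw [hS, sum_single_aux]
      ring
    have key2 : Int.fdiv (∑ l, (a l : ℤ) * ((m + Pi.single j 1 : Fin n → ℤ)) l) (r : ℤ) = c k := by
      rw [hS']
      exact fdiv_aux _ _ _ hr' (by linarith) (by linarith)
    refine ⟨j, m, ?_, ?_⟩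
    · funext l
      rcases eq_or_ne l k with rfl | hl
      · simp only [roundDown]
        rw [Function.update_self, key1]
      · simp only [roundDown]
        rw [Function.update_of_ne hl, hm, Function.update_of_ne hl]
    · funext l
      rcases eq_or_ne l k with rfl | hl
      · simp only [roundDown]
        rw [Function.update_self, key2]
        simp [Pi.single_eq_of_ne (Ne.symm hjk)]
      · simp only [roundDown]
        rw [Function.update_of_ne hl]
        simp only [Pi.add_apply, hm, Function.update_of_ne hl]
end

section
/- Assume n ≥ 2, gcd(a_1, …, a_n, r) = 1, and that the star subdivision at v = (1/r)(a_1, …, a_n) is good. Let Γ′ ⊆ ℤ^n be a G_k-brick and set Γ := φ_k^{−1}(Γ′) = {m ∈ ℤ^n : φ_k(m) ∈ Γ′}. Then Γ is a G-brick (the natural inverse of Γ′). -/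
open scoped BigOperators

/-- A weight map `ℤⁿ → ℤ/sℤ`, `m ↦ ∑ j, b j * m j mod s`. -/
def wmap (n s : ℕ) (b : Fin n → ℤ) (m : Fin n → ℤ) : ZMod s :=
  ((∑ j, b j * m j : ℤ) : ZMod s)

/-- Coercion of a vector of naturals to a vector of integers. -/
def natVec {n : ℕ} (p : Fin n → ℕ) : Fin n → ℤ := fun j => (p j : ℤ)

/-- A `w`-prebrick for the weight map `wmap n s b`: a subset `Γ ⊆ ℤⁿ` containing `0`,
on which the weight map restricts to a bijection onto `ℤ/sℤ`, closed under "division"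
(if `γ + p + q ∈ Γ` with `p, q ∈ ℕⁿ` and `γ ∈ Γ` then `γ + p ∈ Γ`), and connected
(every element joined to `0` by a path inside `Γ` with steps `± e_i`). -/
def IsPrebrick (n s : ℕ) (b : Fin n → ℤ) (Γ : Set (Fin n → ℤ)) : Prop :=
  (0 : Fin n → ℤ) ∈ Γ ∧
  Set.BijOn (wmap n s b) Γ Set.univ ∧
  (∀ γ ∈ Γ, ∀ p q : Fin n → ℕ,
    γ + natVec p + natVec q ∈ Γ → γ + natVec p ∈ Γ) ∧
  (∀ γ ∈ Γ, ∃ (N : ℕ) (c : ℕ → Fin n → ℤ), c 0 = γ ∧ c N = 0 ∧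
    (∀ t ≤ N, c t ∈ Γ) ∧
    (∀ t < N, ∃ i : Fin n,
      c (t + 1) = c t + Pi.single i 1 ∨ c (t + 1) = c t - Pi.single i 1))

/-- Generators of the monoid `S(Γ)`: elements `p + γ - w_Γ(p + γ)` where `p ∈ ℕⁿ`,
`γ ∈ Γ` and `w_Γ(p + γ)` is the (unique) element `γ' ∈ Γ` of the same weight as `p + γ`. -/
def brickGens (n s : ℕ) (b : Fin n → ℤ) (Γ : Set (Fin n → ℤ)) : Set (Fin n → ℤ) :=
  {d | ∃ p : Fin n → ℕ, ∃ γ ∈ Γ, ∃ γ' ∈ Γ,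
    wmap n s b (natVec p + γ) = wmap n s b γ' ∧ d = natVec p + γ - γ'}

/-- The submonoid `S(Γ)` of `(ℤⁿ, +)`. -/
def SGamma (n s : ℕ) (b : Fin n → ℤ) (Γ : Set (Fin n → ℤ)) :
    AddSubmonoid (Fin n → ℤ) :=
  AddSubmonoid.closure (brickGens n s b Γ)

/-- A `w`-brick: a `w`-prebrick with `S(Γ) ∩ (-S(Γ)) = {0}`. -/
def IsBrick (n s : ℕ) (b : Fin n → ℤ) (Γ : Set (Fin n → ℤ)) : Prop :=
  IsPrebrick n s b Γ ∧
  ∀ d ∈ SGamma n s b Γ, -d ∈ SGamma n s b Γ → d = 0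

namespace StarAux

variable {n : ℕ} (r : ℕ) (a : Fin n → ℕ) (k : Fin n)

/-- `A m = ∑ a j * m j`. -/
def A (m : Fin n → ℤ) : ℤ := ∑ j, (a j : ℤ) * m j

lemma A_add (x y : Fin n → ℤ) : A a (x + y) = A a x + A a y := by
  simp [A, mul_add, Finset.sum_add_distrib]

lemma A_zero : A a (0 : Fin n → ℤ) = 0 := by simp [A]

lemma A_neg (x : Fin n → ℤ) : A a (-x) = -(A a x) := by
  simp [A, Finset.sum_neg_distrib]

lemma A_natVec_nonneg (p : Fin n → ℕ) : 0 ≤ A a (natVec p) := by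
  apply Finset.sum_nonneg
  intro j _
  exact mul_nonneg (Int.ofNat_nonneg _) (Int.ofNat_nonneg _)

lemma A_single (i : Fin n) (c : ℤ) : A a (Pi.single i c) = (a i : ℤ) * c := by
  classical
  unfold A
  rw [Finset.sum_eq_single i]
  · simp
  · intro j _ hj; simp [Pi.single_eq_of_ne hj]
  · simp

lemma update_eq (m : Fin n → ℤ) (v : ℤ) :
    Function.update m k v = m + Pi.single k (v - m k) := by
  classical
  funext j
  by_cases hj : j = k
  · subst hj; simp
  · simp [Function.update_of_ne hj, Pi.single_eq_of_ne hj]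

lemma A_update (m : Fin n → ℤ) (v : ℤ) :
    A a (Function.update m k v) = A a m - (a k : ℤ) * m k + (a k : ℤ) * v := by
  rw [update_eq, A_add, A_single]
  ring

lemma roundDown_eq (hr : 0 < r) (m : Fin n → ℤ) :
    roundDown n r a k m = Function.update m k (A a m / r) := by
  unfold roundDown A
  rw [Int.fdiv_eq_ediv_of_nonneg _ (by positivity)]

/-- characterization of the fiber -/
lemma roundDown_eq_iff (hr : 0 < r) (m c : Fin n → ℤ) :
    roundDown n r a k m = c ↔
      ((∀ j, j ≠ k → m j = c j) ∧ (r : ℤ) * c k ≤ A a m ∧ A a m < (r : ℤ) * c k + r) := by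
  rw [roundDown_eq r a k hr]
  constructor
  · intro h
    refine ⟨fun j hj => by rw [← congrFun h j, Function.update_of_ne hj], ?_, ?_⟩
    · have hk : A a m / r = c k := by rw [← congrFun h k, Function.update_self]
      have := (Int.le_ediv_iff_mul_le (by exact_mod_cast hr)).mp hk.ge
      linarith [this]
    · have hk : A a m / r = c k := by rw [← congrFun h k, Function.update_self]
      have := (Int.ediv_lt_iff_lt_mul (by exact_mod_cast hr)).mp (hk.le.trans_lt (lt_add_one _))
      linarith [this]
  · rintro ⟨h1, h2, h3⟩
    funext j
    by_cases hj : j = k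
    · subst hj
      rw [Function.update_self]
      have l1 : c j ≤ A a m / r := (Int.le_ediv_iff_mul_le (by exact_mod_cast hr)).mpr (by linarith)
      have l2 : A a m / r < c j + 1 := (Int.ediv_lt_iff_lt_mul (by exact_mod_cast hr)).mpr (by linarith)
      omega
    · rw [Function.update_of_ne hj]; exact h1 j hj


/-- the `G_k` weight vector -/
def bb (c : Fin n → ℤ) : ℤ := ∑ j, (if j = k then -(r:ℤ) else (a j : ℤ)) * c j

lemma bb_eq (c : Fin n → ℤ) :
    bb r a k c = A a c - ((a k : ℤ) + r) * c k := by
  unfold bb A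
  have key : ∀ j : Fin n, (if j = k then -(r:ℤ) else (a j : ℤ)) * c j
      = (a j : ℤ) * c j + (if j = k then (-(r:ℤ) - (a k : ℤ)) * c k else 0) := by
    intro j
    by_cases h : j = k
    · subst h; simp; ring
    · simp [h]
  rw [Finset.sum_congr rfl (fun j _ => key j), Finset.sum_add_distrib,
    Finset.sum_ite_eq' Finset.univ k]
  simp
  ring

lemma wmap_eq_bb (c : Fin n → ℤ) :
    wmap n (a k) (fun j => if j = k then -(r : ℤ) else (a j : ℤ)) c
      = ((bb r a k c : ℤ) : ZMod (a k)) := rfl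

lemma wmap_eq_A (c : Fin n → ℤ) :
    wmap n r (fun j => (a j : ℤ)) c = ((A a c : ℤ) : ZMod r) := rfl

lemma bb_roundDown (hr : 0 < r) (m : Fin n → ℤ) :
    bb r a k (roundDown n r a k m) = A a m % r - (a k : ℤ) * m k := by
  rw [roundDown_eq r a k hr, bb_eq, A_update]
  rw [Function.update_self]
  have := Int.mul_ediv_add_emod (A a m) (r : ℤ)
  ring_nf
  linarith [this]

lemma wk_roundDown (hr : 0 < r) (m : Fin n → ℤ) :
    wmap n (a k) (fun j => if j = k then -(r : ℤ) else (a j : ℤ)) (roundDown n r a k m)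
      = ((A a m % r : ℤ) : ZMod (a k)) := by
  rw [wmap_eq_bb, bb_roundDown r a k hr]
  push_cast
  simp [ZMod.natCast_self]

/-- translation lemma: rounding down commutes with adding a natural vector,
up to another natural vector. -/
lemma roundDown_add_natVec (hr : 0 < r) (m : Fin n → ℤ) (p : Fin n → ℕ) :
    ∃ p' : Fin n → ℕ, roundDown n r a k (m + natVec p)
      = roundDown n r a k m + natVec p' := by
  have hq : 0 ≤ A a (m + natVec p) / r - A a m / r := by
    have : A a m ≤ A a (m + natVec p) := by
      rw [A_add]; linarith [A_natVec_nonneg a p]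
    have := Int.ediv_le_ediv (c := (r:ℤ)) (by exact_mod_cast hr) this
    omega
  refine ⟨fun j => if j = k then (A a (m + natVec p) / r - A a m / r).toNat else p j, ?_⟩
  rw [roundDown_eq r a k hr, roundDown_eq r a k hr]
  funext j
  by_cases hj : j = k
  · subst hj
    simp only [Function.update_self, Pi.add_apply, natVec]
    simp only [if_true]
    rw [Int.toNat_of_nonneg hq]
    ring
  · simp only [Function.update_of_ne hj, Pi.add_apply, natVec]
    rw [if_neg hj]


/-- a path inside `Γ` from `x` to `y` with unit steps. -/
def Path (Γ : Set (Fin n → ℤ)) (x y : Fin n → ℤ) : Prop :=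
  ∃ (N : ℕ) (c : ℕ → Fin n → ℤ), c 0 = x ∧ c N = y ∧ (∀ t ≤ N, c t ∈ Γ) ∧
    (∀ t < N, ∃ i : Fin n,
      c (t + 1) = c t + Pi.single i 1 ∨ c (t + 1) = c t - Pi.single i 1)

lemma Path.refl {Γ : Set (Fin n → ℤ)} {x : Fin n → ℤ} (hx : x ∈ Γ) : Path Γ x x :=
  ⟨0, fun _ => x, rfl, rfl, fun _ _ => hx, fun t ht => absurd ht (Nat.not_lt_zero t)⟩

lemma Path.trans {Γ : Set (Fin n → ℤ)} {x y z : Fin n → ℤ}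
    (h1 : Path Γ x y) (h2 : Path Γ y z) : Path Γ x z := by
  obtain ⟨N1, c1, hc10, hc1N, hc1mem, hc1step⟩ := h1
  obtain ⟨N2, c2, hc20, hc2N, hc2mem, hc2step⟩ := h2
  refine ⟨N1 + N2, fun t => if t ≤ N1 then c1 t else c2 (t - N1), ?_, ?_, ?_, ?_⟩
  · simp [hc10]
  · dsimp only
    rcases Nat.eq_zero_or_pos N2 with h | h
    · subst h; simp [hc1N, ← hc20, hc2N]
    · rw [if_neg (by omega), (by omega : N1 + N2 - N1 = N2), hc2N]
  · intro t ht
    dsimp only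
    by_cases h : t ≤ N1
    · rw [if_pos h]; exact hc1mem t h
    · rw [if_neg h]; exact hc2mem (t - N1) (by omega)
  · intro t ht
    dsimp only
    by_cases h : t + 1 ≤ N1
    · rw [if_pos h, if_pos (by omega)]
      exact hc1step t (by omega)
    · by_cases h' : t ≤ N1
      · have htN : t = N1 := by omega
        rw [if_neg (by omega), if_pos h', htN, hc1N, (by omega : N1 + 1 - N1 = 1)]
        have := hc2step 0 (by omega)
        rwa [hc20] at this
      · rw [if_neg h, if_neg h', (by omega : t + 1 - N1 = (t - N1) + 1)]
        exact hc2step (t - N1) (by omega)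

lemma Path.symm {Γ : Set (Fin n → ℤ)} {x y : Fin n → ℤ}
    (h : Path Γ x y) : Path Γ y x := by
  obtain ⟨N, c, hc0, hcN, hmem, hstep⟩ := h
  refine ⟨N, fun t => c (N - t), by simp [hcN], by simp [hc0], ?_, ?_⟩
  · intro t ht; exact hmem (N - t) (by omega)
  · intro t ht
    obtain ⟨i, hi⟩ := hstep (N - t - 1) (by omega)
    rw [(by omega : N - t - 1 + 1 = N - t)] at hi
    refine ⟨i, ?_⟩
    dsimp only
    rw [(by omega : N - (t + 1) = N - t - 1)]
    rcases hi with hi | hi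
    · right; rw [hi]; abel
    · left; rw [hi]; abel

lemma Path.snoc {Γ : Set (Fin n → ℤ)} {x y z : Fin n → ℤ}
    (h : Path Γ x y) (hz : z ∈ Γ)
    (hstep : ∃ i : Fin n, z = y + Pi.single i 1 ∨ z = y - Pi.single i 1) :
    Path Γ x z := by
  have hy : y ∈ Γ := by
    obtain ⟨N, c, hc0, hcN, hmem, _⟩ := h
    exact hcN ▸ hmem N le_rfl
  refine h.trans ⟨1, fun t => if t = 0 then y else z, by simp, by simp, ?_, ?_⟩
  · intro t ht
    dsimp only
    interval_cases t
    · simpa using hy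
    · simpa using hz
  · intro t ht
    interval_cases t
    simpa using hstep

/-- straight segment in direction `e k`, going up. -/
lemma path_seg_up {Γ : Set (Fin n → ℤ)} {x : Fin n → ℤ} (d : ℕ)
    (hmem : ∀ s : ℕ, s ≤ d → x + (s : ℤ) • Pi.single k 1 ∈ Γ) :
    Path Γ x (x + (d : ℤ) • Pi.single k 1) := by
  induction d with
  | zero => simpa using Path.refl (by simpa using hmem 0 le_rfl)
  | succ d ih =>
    refine (ih (fun s hs => hmem s (by omega))).snoc (hmem (d+1) le_rfl) ⟨k, Or.inl ?_⟩
    push_cast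
    rw [add_smul, one_smul]
    abel

/-- straight segment in direction `e k`, going down. -/
lemma path_seg_down {Γ : Set (Fin n → ℤ)} {x : Fin n → ℤ} (d : ℕ)
    (hmem : ∀ s : ℕ, s ≤ d → x - (s : ℤ) • Pi.single k 1 ∈ Γ) :
    Path Γ x (x - (d : ℤ) • Pi.single k 1) := by
  induction d with
  | zero => simpa using Path.refl (by simpa using hmem 0 le_rfl)
  | succ d ih =>
    refine (ih (fun s hs => hmem s (by omega))).snoc (hmem (d+1) le_rfl) ⟨k, Or.inr ?_⟩
    push_cast
    rw [add_smul, one_smul]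
    abel


lemma A_add_smul_single (x : Fin n → ℤ) (s : ℤ) (i : Fin n) :
    A a (x + s • Pi.single i 1) = A a x + s * (a i : ℤ) := by
  rw [A_add]
  congr 1
  have : s • (Pi.single i (1:ℤ) : Fin n → ℤ) = Pi.single i s := by
    funext j
    by_cases hj : j = i
    · subst hj; simp
    · simp [Pi.single_eq_of_ne hj]
  rw [this, A_single]
  ring

/-- any two points of the same fiber are joined by a path inside the fiber. -/
lemma fiber_path (hr : 0 < r) {Γ' : Set (Fin n → ℤ)} {x y c : Fin n → ℤ}
    (hc : c ∈ Γ') (hx : roundDown n r a k x = c) (hy : roundDown n r a k y = c) :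
    Path {m | roundDown n r a k m ∈ Γ'} x y := by
  obtain ⟨hx1, hx2, hx3⟩ := (roundDown_eq_iff r a k hr x c).mp hx
  obtain ⟨hy1, hy2, hy3⟩ := (roundDown_eq_iff r a k hr y c).mp hy
  have hxy : ∀ d : ℤ, 0 ≤ d → ∀ x y : Fin n → ℤ,
      (∀ j, j ≠ k → x j = c j) → (r : ℤ) * c k ≤ A a x → A a x < (r:ℤ) * c k + r →
      (∀ j, j ≠ k → y j = c j) → (r : ℤ) * c k ≤ A a y → A a y < (r:ℤ) * c k + r →
      y k - x k = d →
      Path {m | roundDown n r a k m ∈ Γ'} x y := by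
    intro d hd x y hx1 hx2 hx3 hy1 hy2 hy3 hdd
    have hyx : y = x + (d.toNat : ℤ) • Pi.single k 1 := by
      funext j
      by_cases hj : j = k
      · subst hj
        simp only [Pi.add_apply, Pi.smul_apply, Pi.single_eq_same, smul_eq_mul, mul_one,
          Int.toNat_of_nonneg hd]
        omega
      · simp [Pi.single_eq_of_ne hj, hx1 j hj, hy1 j hj]
    have hAd : A a y = A a x + d * (a k : ℤ) := by
      rw [hyx, A_add_smul_single, Int.toNat_of_nonneg hd]
    rw [hyx]
    apply path_seg_up
    intro s hs
    show roundDown n r a k _ ∈ Γ'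
    have hiff := (roundDown_eq_iff r a k hr (x + (s:ℤ) • Pi.single k 1) c).mpr ?_
    · rw [hiff]; exact hc
    refine ⟨?_, ?_, ?_⟩
    · intro j hj
      simp [Pi.single_eq_of_ne hj, hx1 j hj]
    · rw [A_add_smul_single]
      have : (0:ℤ) ≤ (s:ℤ) * (a k : ℤ) := by positivity
      linarith
    · rw [A_add_smul_single]
      have hsd : (s : ℤ) ≤ d := by omega
      have : (s:ℤ) * (a k : ℤ) ≤ d * (a k : ℤ) :=
        mul_le_mul_of_nonneg_right hsd (Int.ofNat_nonneg _)
      linarith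
  rcases le_or_gt (x k) (y k) with h | h
  · exact hxy (y k - x k) (by omega) x y hx1 hx2 hx3 hy1 hy2 hy3 rfl
  · exact (hxy (x k - y k) (by omega) y x hy1 hy2 hy3 hx1 hx2 hx3 rfl).symm

/-- lift a single step of a path in `Γ'` to a path in `Γ`. -/
lemma step_lift (hr : 0 < r) (ha : ∀ j, 0 < a j)
    (hgood : ∀ i j : Fin n, i ≠ j → a i + a j ≤ r) (hakr : a k < r)
    {Γ' : Set (Fin n → ℤ)} {c c'' : Fin n → ℤ} (hc : c ∈ Γ') (hc'' : c'' ∈ Γ')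
    (hstep : ∃ i : Fin n, c'' = c + Pi.single i 1 ∨ c'' = c - Pi.single i 1)
    {m : Fin n → ℤ} (hm : roundDown n r a k m = c) :
    ∃ m', roundDown n r a k m' = c'' ∧ Path {m | roundDown n r a k m ∈ Γ'} m m' := by
  classical
  set Γ : Set (Fin n → ℤ) := {m | roundDown n r a k m ∈ Γ'} with hΓ
  have hak : (0:ℤ) < (a k : ℤ) := by exact_mod_cast ha k
  have hakr' : (a k : ℤ) < (r : ℤ) := by exact_mod_cast hakr
  have hrz : (0:ℤ) < (r:ℤ) := by exact_mod_cast hr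
  set C : ℤ := A a c - (a k : ℤ) * c k with hC
  -- minimal fiber element
  set sm : ℤ := -(-(((r:ℤ)) * c k - C) / (a k : ℤ)) with hsm
  have hsm1 : (r:ℤ) * c k ≤ C + (a k : ℤ) * sm := by
    have := Int.ediv_mul_le (-((r:ℤ) * c k - C)) (ne_of_gt hak)
    rw [hsm]; nlinarith [this]
  have hsm2 : C + (a k : ℤ) * sm < (r:ℤ) * c k + (a k : ℤ) := by
    have := Int.lt_ediv_add_one_mul_self (-((r:ℤ) * c k - C)) hak
    rw [hsm]; nlinarith [this]
  -- maximal fiber element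
  set sM : ℤ := ((r:ℤ) * c k + r - 1 - C) / (a k : ℤ) with hsM
  have hsM1 : C + (a k : ℤ) * sM ≤ (r:ℤ) * c k + r - 1 := by
    have := Int.ediv_mul_le ((r:ℤ) * c k + r - 1 - C) (ne_of_gt hak)
    rw [hsM]; nlinarith [this]
  have hsM2 : (r:ℤ) * c k + r - (a k : ℤ) ≤ C + (a k : ℤ) * sM := by
    have := Int.lt_ediv_add_one_mul_self ((r:ℤ) * c k + r - 1 - C) hak
    rw [hsM]; nlinarith [this]
  have hupd : ∀ s : ℤ, (∀ j, j ≠ k → Function.update c k s j = c j) := by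
    intro s j hj; rw [Function.update_of_ne hj]
  have hAupd : ∀ s : ℤ, A a (Function.update c k s) = C + (a k : ℤ) * s := by
    intro s; rw [A_update, hC]
  have hmin : roundDown n r a k (Function.update c k sm) = c := by
    rw [roundDown_eq_iff r a k hr]
    exact ⟨hupd sm, by rw [hAupd]; linarith, by rw [hAupd]; linarith⟩
  have hmax : roundDown n r a k (Function.update c k sM) = c := by
    rw [roundDown_eq_iff r a k hr]
    exact ⟨hupd sM, by rw [hAupd]; linarith, by rw [hAupd]; linarith⟩
  have hpmin : Path Γ m (Function.update c k sm) := fiber_path r a k hr hc hm hmin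
  have hpmax : Path Γ m (Function.update c k sM) := fiber_path r a k hr hc hm hmax
  obtain ⟨i, hi | hi⟩ := hstep
  · -- c'' = c + e_i
    by_cases hik : i = k
    · rw [hik] at hi
      have heq : roundDown n r a k (Function.update c k sM + Pi.single k 1) = c'' := by
        rw [roundDown_eq_iff r a k hr]
        refine ⟨?_, ?_, ?_⟩
        · intro j hj
          simp [hi, Pi.single_eq_of_ne hj, Function.update_of_ne hj]
        · rw [show Function.update c k sM + Pi.single k 1
              = Function.update c k sM + (1:ℤ) • Pi.single k 1 by simp,
            A_add_smul_single, hAupd]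
          have : c'' k = c k + 1 := by simp [hi]
          rw [this]; linarith
        · rw [show Function.update c k sM + Pi.single k 1
              = Function.update c k sM + (1:ℤ) • Pi.single k 1 by simp,
            A_add_smul_single, hAupd]
          have : c'' k = c k + 1 := by simp [hi]
          rw [this]; linarith
      exact ⟨_, heq, hpmax.snoc (by rw [Set.mem_setOf_eq, heq]; exact hc'') ⟨k, Or.inl rfl⟩⟩
    · have hgood' : (a i : ℤ) + (a k : ℤ) ≤ (r:ℤ) := by exact_mod_cast hgood i k hik
      have hai : (0:ℤ) < (a i : ℤ) := by exact_mod_cast ha i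
      have heq : roundDown n r a k (Function.update c k sm + Pi.single i 1) = c'' := by
        rw [roundDown_eq_iff r a k hr]
        refine ⟨?_, ?_, ?_⟩
        · intro j hj
          simp [hi, Function.update_of_ne hj]
        · rw [show Function.update c k sm + Pi.single i 1
              = Function.update c k sm + (1:ℤ) • Pi.single i 1 by simp,
            A_add_smul_single, hAupd]
          have : c'' k = c k := by simp [hi, Pi.single_eq_of_ne (Ne.symm hik)]
          rw [this]; linarith
        · rw [show Function.update c k sm + Pi.single i 1
              = Function.update c k sm + (1:ℤ) • Pi.single i 1 by simp,
            A_add_smul_single, hAupd]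
          have : c'' k = c k := by simp [hi, Pi.single_eq_of_ne (Ne.symm hik)]
          rw [this]; linarith
      exact ⟨_, heq, hpmin.snoc (by rw [Set.mem_setOf_eq, heq]; exact hc'') ⟨i, Or.inl rfl⟩⟩
  · -- c'' = c - e_i
    by_cases hik : i = k
    · rw [hik] at hi
      have heq : roundDown n r a k (Function.update c k sm - Pi.single k 1) = c'' := by
        rw [roundDown_eq_iff r a k hr]
        refine ⟨?_, ?_, ?_⟩
        · intro j hj
          simp [hi, Pi.single_eq_of_ne hj, Function.update_of_ne hj]
        · rw [show Function.update c k sm - Pi.single k 1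
              = Function.update c k sm + (-1:ℤ) • Pi.single k 1 by simp; abel,
            A_add_smul_single, hAupd]
          have : c'' k = c k - 1 := by simp [hi]
          rw [this]; linarith
        · rw [show Function.update c k sm - Pi.single k 1
              = Function.update c k sm + (-1:ℤ) • Pi.single k 1 by simp; abel,
            A_add_smul_single, hAupd]
          have : c'' k = c k - 1 := by simp [hi]
          rw [this]; linarith
      exact ⟨_, heq, hpmin.snoc (by rw [Set.mem_setOf_eq, heq]; exact hc'') ⟨k, Or.inr rfl⟩⟩
    · have hgood' : (a i : ℤ) + (a k : ℤ) ≤ (r:ℤ) := by exact_mod_cast hgood i k hik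
      have hai : (0:ℤ) < (a i : ℤ) := by exact_mod_cast ha i
      have heq : roundDown n r a k (Function.update c k sM - Pi.single i 1) = c'' := by
        rw [roundDown_eq_iff r a k hr]
        refine ⟨?_, ?_, ?_⟩
        · intro j hj
          simp [hi, Function.update_of_ne hj]
        · rw [show Function.update c k sM - Pi.single i 1
              = Function.update c k sM + (-1:ℤ) • Pi.single i 1 by simp; abel,
            A_add_smul_single, hAupd]
          have : c'' k = c k := by simp [hi, Pi.single_eq_of_ne (Ne.symm hik)]
          rw [this]; linarith
        · rw [show Function.update c k sM - Pi.single i 1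
              = Function.update c k sM + (-1:ℤ) • Pi.single i 1 by simp; abel,
            A_add_smul_single, hAupd]
          have : c'' k = c k := by simp [hi, Pi.single_eq_of_ne (Ne.symm hik)]
          rw [this]; linarith
      exact ⟨_, heq, hpmax.snoc (by rw [Set.mem_setOf_eq, heq]; exact hc'') ⟨i, Or.inr rfl⟩⟩


lemma A_sub (x y : Fin n → ℤ) : A a (x - y) = A a x - A a y := by
  rw [sub_eq_add_neg, A_add, A_neg]; ring

lemma roundDown_zero (hr : 0 < r) : roundDown n r a k (0 : Fin n → ℤ) = 0 := by
  rw [roundDown_eq r a k hr, A_zero]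
  funext j
  by_cases hj : j = k
  · subst hj; simp
  · simp [Function.update_of_ne hj]

/-- lifting a whole path from `Γ'` to `Γ`. -/
lemma connect (hr : 0 < r) (ha : ∀ j, 0 < a j)
    (hgood : ∀ i j : Fin n, i ≠ j → a i + a j ≤ r) (hakr : a k < r)
    {Γ' : Set (Fin n → ℤ)} :
    ∀ (N : ℕ) (c' : ℕ → Fin n → ℤ), c' N = 0 → (∀ t ≤ N, c' t ∈ Γ') →
    (∀ t < N, ∃ i : Fin n,
      c' (t + 1) = c' t + Pi.single i 1 ∨ c' (t + 1) = c' t - Pi.single i 1) →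
    ∀ m, roundDown n r a k m = c' 0 →
    Path {m | roundDown n r a k m ∈ Γ'} m 0 := by
  intro N
  induction N with
  | zero =>
    intro c' hN hmem _ m hm
    rw [hN] at hm
    have h0 : roundDown n r a k (0 : Fin n → ℤ) = 0 := roundDown_zero r a k hr
    exact fiber_path r a k hr (hN ▸ hmem 0 le_rfl) hm h0
  | succ N ih =>
    intro c' hN hmem hstep m hm
    obtain ⟨m1, hm1, hpath⟩ := step_lift r a k hr ha hgood hakr
      (hmem 0 (by omega)) (hmem 1 (by omega)) (hstep 0 (by omega)) hm
    refine hpath.trans (ih (fun t => c' (t + 1)) hN (fun t ht => hmem (t+1) (by omega))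
      (fun t ht => hstep (t+1) (by omega)) m1 hm1)

/-- the partial inverse of `roundDown` on elements of weight zero. -/
def T (d : Fin n → ℤ) : Fin n → ℤ := Function.update d k (A a d / r)

lemma T_add (d e : Fin n → ℤ) (hd : (r:ℤ) ∣ A a d) :
    T r a k (d + e) = T r a k d + T r a k e := by
  funext j
  by_cases hj : j = k
  · subst hj
    simp only [T, Function.update_self, Pi.add_apply, A_add]
    exact Int.add_ediv_of_dvd_left hd
  · simp [T, Function.update_of_ne hj]

lemma T_zero : T r a k (0 : Fin n → ℤ) = 0 := by
  funext j
  by_cases hj : j = k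
  · subst hj; simp [T, A_zero]
  · simp [T, Function.update_of_ne hj]

lemma T_eq_zero (hr : 0 < r) (hak : 0 < a k) {d : Fin n → ℤ}
    (hd : (r:ℤ) ∣ A a d) (h : T r a k d = 0) : d = 0 := by
  have hoff : ∀ j, j ≠ k → d j = 0 := by
    intro j hj
    have := congrFun h j
    rwa [T, Function.update_of_ne hj] at this
  have hdiv : A a d / r = 0 := by
    have := congrFun h k
    rwa [T, Function.update_self] at this
  have hA : A a d = 0 := by
    have := Int.ediv_mul_cancel hd
    rw [hdiv] at this
    linarith
  have hupd0 : Function.update d k 0 = 0 := by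
    funext j
    by_cases hj : j = k
    · subst hj; simp
    · simp [Function.update_of_ne hj, hoff j hj]
  have := A_update a k d 0
  rw [hupd0, A_zero, hA] at this
  have hdk : d k = 0 := by
    have hak' : (0:ℤ) < (a k : ℤ) := by exact_mod_cast hak
    nlinarith [this]
  funext j
  by_cases hj : j = k
  · subst hj; simpa using hdk
  · simpa using hoff j hj


lemma gen_lift (hr : 0 < r) {Γ' : Set (Fin n → ℤ)} {d : Fin n → ℤ}
    (hd : d ∈ brickGens n r (fun j => (a j : ℤ)) {m | roundDown n r a k m ∈ Γ'}) :
    (r:ℤ) ∣ A a d ∧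
      T r a k d ∈ brickGens n (a k) (fun j => if j = k then -(r : ℤ) else (a j : ℤ)) Γ' := by
  obtain ⟨p, γ, hγ, γ'', hγ'', hw, hdef⟩ := hd
  rw [wmap_eq_A, wmap_eq_A] at hw
  have hmod : A a (natVec p + γ) % (r:ℤ) = A a γ'' % (r:ℤ) := by
    rwa [ZMod.intCast_eq_intCast_iff] at hw
  have hAd : A a d = A a (natVec p + γ) - A a γ'' := by
    rw [hdef, A_sub]
  have hdvd : (r:ℤ) ∣ A a d := by
    rw [hAd]
    refine Int.dvd_of_emod_eq_zero ?_
    rw [Int.sub_emod, hmod, sub_self, Int.zero_emod]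
  refine ⟨hdvd, ?_⟩
  obtain ⟨p', hp'⟩ := roundDown_add_natVec r a k hr γ p
  have hcomm : natVec p + γ = γ + natVec p := add_comm _ _
  -- T d = roundDown (γ + natVec p) - roundDown γ''
  have hT : T r a k d = roundDown n r a k (γ + natVec p) - roundDown n r a k γ'' := by
    funext j
    by_cases hj : j = k
    · rw [hj]
      rw [T, Function.update_self]
      rw [roundDown_eq r a k hr, roundDown_eq r a k hr]
      simp only [Pi.sub_apply, Function.update_self]
      have h1 : A a (γ + natVec p) = A a d + A a γ'' := by
        rw [hAd, hcomm]; ring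
      rw [h1, Int.add_ediv_of_dvd_left hdvd]
      ring
    · rw [T, Function.update_of_ne hj, hdef]
      rw [roundDown_eq r a k hr, roundDown_eq r a k hr]
      simp only [Pi.sub_apply, Pi.add_apply, Function.update_of_ne hj, natVec]
      ring
  have hsum : natVec p' + roundDown n r a k γ = roundDown n r a k (γ + natVec p) := by
    rw [hp']; abel
  refine ⟨p', roundDown n r a k γ, hγ, roundDown n r a k γ'', hγ'', ?_, ?_⟩
  · rw [hsum, wk_roundDown r a k hr, wk_roundDown r a k hr, ← hcomm, hmod]
  · rw [hT, hsum]

end StarAux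

open StarAux

/-- If `Γ'` is a `G_k`-brick, then its natural inverse
`Γ = φ_k⁻¹(Γ') = {m : φ_k(m) ∈ Γ'}` is a `G`-brick. Here the `G`-weight map has
weight vector `(a 1, …, a n)` modulo `r` and the `G_k`-weight map has weight vector
`(a 1, …, -r, …, a n)` (with `-r` in the `k`-th place) modulo `a k`. -/
theorem stmt_6 (n : ℕ) (hn : 2 ≤ n) (r : ℕ) (hr : 1 ≤ r) (a : Fin n → ℕ)
    (ha : ∀ j, 0 < a j) (k : Fin n)
    (hgcd : Nat.gcd (Finset.univ.gcd a) r = 1)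
    (hgood : ∀ i j : Fin n, i ≠ j → a i + a j ≤ r)
    (Γ' : Set (Fin n → ℤ))
    (hΓ' : IsBrick n (a k) (fun j => if j = k then -(r : ℤ) else (a j : ℤ)) Γ') :
    IsBrick n r (fun j => (a j : ℤ)) {m | roundDown n r a k m ∈ Γ'} := by
  classical
  have hr0 : 0 < r := hr
  have hrz : (0:ℤ) < (r:ℤ) := by exact_mod_cast hr
  have hak : 0 < a k := ha k
  have hak' : (0:ℤ) < (a k : ℤ) := by exact_mod_cast hak
  haveI : NeZero r := ⟨by omega⟩
  obtain ⟨⟨h0', hbij', hdiv', hconn'⟩, hS'⟩ := hΓ'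
  have hnt : Nontrivial (Fin n) := by
    constructor
    exact ⟨⟨0, by omega⟩, ⟨1, by omega⟩, by simp [Fin.ext_iff]⟩
  obtain ⟨i0, hi0⟩ := exists_ne k
  have hakr : a k < r := by
    have := hgood i0 k hi0
    have := ha i0
    omega
  constructor
  · refine ⟨?_, ⟨fun _ _ => Set.mem_univ _, ?_, ?_⟩, ?_, ?_⟩
    · -- 0 ∈ Γ
      show roundDown n r a k 0 ∈ Γ'
      rw [roundDown_zero r a k hr0]
      exact h0'
    · -- InjOn
      intro m1 hm1 m2 hm2 hw
      rw [wmap_eq_A, wmap_eq_A] at hw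
      have hmod : A a m1 % (r:ℤ) = A a m2 % (r:ℤ) := by
        rwa [ZMod.intCast_eq_intCast_iff] at hw
      have hwk : wmap n (a k) (fun j => if j = k then -(r : ℤ) else (a j : ℤ))
          (roundDown n r a k m1)
          = wmap n (a k) (fun j => if j = k then -(r : ℤ) else (a j : ℤ))
          (roundDown n r a k m2) := by
        rw [wk_roundDown r a k hr0, wk_roundDown r a k hr0, hmod]
      have heq : roundDown n r a k m1 = roundDown n r a k m2 := hbij'.2.1 hm1 hm2 hwk
      have hoff : ∀ j, j ≠ k → m1 j = m2 j := by
        intro j hj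
        have := congrFun heq j
        rwa [roundDown_eq r a k hr0, roundDown_eq r a k hr0,
          Function.update_of_ne hj, Function.update_of_ne hj] at this
      have hdivq : A a m1 / (r:ℤ) = A a m2 / (r:ℤ) := by
        have := congrFun heq k
        rwa [roundDown_eq r a k hr0, roundDown_eq r a k hr0,
          Function.update_self, Function.update_self] at this
      have hAeq : A a m1 = A a m2 := by
        have e1 := Int.mul_ediv_add_emod (A a m1) (r:ℤ)
        have e2 := Int.mul_ediv_add_emod (A a m2) (r:ℤ)
        rw [hdivq] at e1
        linarith
      have hupd : Function.update m1 k 0 = Function.update m2 k 0 := by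
        funext j
        by_cases hj : j = k
        · rw [hj]; simp
        · rw [Function.update_of_ne hj, Function.update_of_ne hj]
          exact hoff j hj
      have u1 := A_update a k m1 0
      have u2 := A_update a k m2 0
      rw [hupd] at u1
      have hkk : m1 k = m2 k := by
        have : (a k : ℤ) * m1 k = (a k : ℤ) * m2 k := by linarith
        exact mul_left_cancel₀ (ne_of_gt hak') this
      funext j
      by_cases hj : j = k
      · rw [hj]; exact hkk
      · exact hoff j hj
    · -- SurjOn
      intro y _
      set Y : ℤ := (y.val : ℤ) with hYdef
      have hY0 : 0 ≤ Y := Int.ofNat_nonneg _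
      have hYr : Y < (r:ℤ) := by rw [hYdef]; exact_mod_cast ZMod.val_lt y
      obtain ⟨c', hc', hwc'⟩ := hbij'.2.2 (Set.mem_univ ((Y : ZMod (a k))))
      rw [wmap_eq_bb] at hwc'
      have hmodk : bb r a k c' % (a k:ℤ) = Y % (a k:ℤ) := by
        rwa [ZMod.intCast_eq_intCast_iff] at hwc'
      have hdvd : (a k:ℤ) ∣ (bb r a k c' - Y) := by
        refine Int.dvd_of_emod_eq_zero ?_
        rw [Int.sub_emod, hmodk, sub_self, Int.zero_emod]
      obtain ⟨t, ht⟩ := hdvd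
      have hbbeq := bb_eq r a k c'
      have hAm : A a (Function.update c' k (-t)) = (r:ℤ) * c' k + Y := by
        rw [A_update]
        nlinarith [ht, hbbeq]
      have hrd : roundDown n r a k (Function.update c' k (-t)) = c' := by
        rw [roundDown_eq_iff r a k hr0]
        refine ⟨fun j hj => Function.update_of_ne hj _ _, ?_, ?_⟩
        · rw [hAm]; linarith
        · rw [hAm]; linarith
      refine ⟨Function.update c' k (-t), ?_, ?_⟩
      · show roundDown n r a k _ ∈ Γ'
        rw [hrd]; exact hc'
      · rw [wmap_eq_A, hAm]
        have h1 : (((r:ℤ) * c' k + Y : ℤ) : ZMod r) = ((Y : ℤ) : ZMod r) := by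
          push_cast
          simp [ZMod.natCast_self]
        rw [h1, hYdef]
        push_cast [ZMod.natCast_val, ZMod.cast_id]
        rfl
    · -- division closure
      intro γ hγ p q hpq
      obtain ⟨p', hp'⟩ := roundDown_add_natVec r a k hr0 γ p
      obtain ⟨q', hq'⟩ := roundDown_add_natVec r a k hr0 (γ + natVec p) q
      have hmem : roundDown n r a k γ + natVec p' + natVec q' ∈ Γ' := by
        rw [← hp', ← hq']
        exact hpq
      have := hdiv' (roundDown n r a k γ) hγ p' q' hmem
      show roundDown n r a k (γ + natVec p) ∈ Γ'
      rw [hp']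
      exact this
    · -- connectivity
      intro γ hγ
      obtain ⟨N, c', hc0, hcN, hcmem, hcstep⟩ := hconn' (roundDown n r a k γ) hγ
      have hpath : Path {m | roundDown n r a k m ∈ Γ'} γ 0 :=
        connect r a k hr0 ha hgood hakr N c' hcN hcmem hcstep γ hc0.symm
      obtain ⟨N2, c2, h1, h2, h3, h4⟩ := hpath
      exact ⟨N2, c2, h1, h2, h3, h4⟩
  · -- the brick condition
    intro d hd hnd
    have key : ∀ e, e ∈ SGamma n r (fun j => (a j : ℤ)) {m | roundDown n r a k m ∈ Γ'} →
        (r:ℤ) ∣ A a e ∧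
        T r a k e ∈ SGamma n (a k) (fun j => if j = k then -(r : ℤ) else (a j : ℤ)) Γ' := by
      intro e he
      have he' : e ∈ AddSubmonoid.closure
          (brickGens n r (fun j => (a j : ℤ)) {m | roundDown n r a k m ∈ Γ'}) := he
      refine AddSubmonoid.closure_induction ?_ ?_ ?_ he'
      · intro x hx
        obtain ⟨hxd, hxg⟩ := gen_lift r a k hr0 hx
        exact ⟨hxd, AddSubmonoid.subset_closure hxg⟩
      · exact ⟨by rw [A_zero]; exact dvd_zero _, by rw [T_zero]; exact zero_mem _⟩
      · rintro x y hx hy ⟨hdx, hTx⟩ ⟨hdy, hTy⟩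
        refine ⟨by rw [A_add]; exact dvd_add hdx hdy, ?_⟩
        rw [T_add r a k x y hdx]
        exact add_mem hTx hTy
    obtain ⟨hdvd, hTd⟩ := key d hd
    obtain ⟨hdvdn, hTnd⟩ := key (-d) hnd
    have hTneg : T r a k (-d) = - T r a k d := by
      have h0 : T r a k (d + (-d)) = T r a k d + T r a k (-d) := T_add r a k d (-d) hdvd
      rw [add_neg_cancel, T_zero] at h0
      exact (neg_eq_of_add_eq_zero_right h0.symm).symm
    have hTd0 : T r a k d = 0 := hS' (T r a k d) hTd (by rw [← hTneg]; exact hTnd)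
    exact T_eq_zero r a k hr0 hak hdvd hTd0
end

section
/- Assume n ≥ 2, gcd(a_1, …, a_n, r) = 1, and that the star subdivision at v = (1/r)(a_1, …, a_n) is good. Let Γ′ ⊆ ℤ^n be a G_k-brick and set Γ := φ_k^{−1}(Γ′). Then every element of S(Γ) is G-invariant, and φ_k restricts to a bijection from S(Γ) onto S(Γ′); in particular φ_k(S(Γ)) = S(Γ′). -/
open scoped BigOperators

namespace Stmt7


variable {n : ℕ}

/-- abbreviation for the A-weights -/
def Aw {n : ℕ} (a : Fin n → ℕ) : Fin n → ℤ := fun j => (a j : ℤ)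

def Bw {n : ℕ} (r : ℕ) (a : Fin n → ℕ) (k : Fin n) : Fin n → ℤ :=
  fun j => if j = k then -(r : ℤ) else (a j : ℤ)

/-- linear form -/
def σv (b : Fin n → ℤ) (m : Fin n → ℤ) : ℤ := ∑ j, b j * m j

lemma σv_add (b x y : Fin n → ℤ) : σv b (x + y) = σv b x + σv b y := by
  simp [σv, mul_add, Finset.sum_add_distrib]

lemma σv_sub (b x y : Fin n → ℤ) : σv b (x - y) = σv b x - σv b y := by
  simp [σv, mul_sub, Finset.sum_sub_distrib]

lemma σv_zero (b : Fin n → ℤ) : σv b (0 : Fin n → ℤ) = 0 := by simp [σv]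

lemma wmap_eq (s : ℕ) (b m : Fin n → ℤ) : wmap n s b m = ((σv b m : ℤ) : ZMod s) := rfl

lemma wmap_eq_iff (s : ℕ) (b x y : Fin n → ℤ) :
    wmap n s b x = wmap n s b y ↔ (s : ℤ) ∣ σv b y - σv b x := by
  rw [wmap_eq, wmap_eq, ZMod.intCast_eq_intCast_iff]
  exact Int.modEq_iff_dvd

lemma σv_split (b m : Fin n → ℤ) (k : Fin n) :
    σv b m = b k * m k + ∑ j ∈ Finset.univ.erase k, b j * m j :=
  (Finset.add_sum_erase _ (fun j => b j * m j) (Finset.mem_univ k)).symm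

lemma σv_update (b m : Fin n → ℤ) (k : Fin n) (t : ℤ) :
    σv b (Function.update m k t) = b k * t + ∑ j ∈ Finset.univ.erase k, b j * m j := by
  have h1 : (fun j => b j * (Function.update m k t j))
      = Function.update (fun j => b j * m j) k (b k * t) := by
    funext j
    rcases eq_or_ne j k with h | h <;> simp [h, Function.update_apply]
  unfold σv
  rw [show (∑ j, b j * Function.update m k t j)
      = ∑ j, Function.update (fun j => b j * m j) k (b k * t) j from by rw [h1]]
  rw [Finset.sum_update_of_mem (Finset.mem_univ k), Finset.erase_eq]

lemma natVec_nonneg (p : Fin n → ℕ) (j : Fin n) : 0 ≤ natVec p j := Int.natCast_nonneg _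

lemma σv_natVec_nonneg (a : Fin n → ℕ) (p : Fin n → ℕ) :
    0 ≤ σv (Aw a) (natVec p) := by
  apply Finset.sum_nonneg
  intro j _
  exact mul_nonneg (Int.natCast_nonneg _) (Int.natCast_nonneg _)

lemma Aw_pos {n : ℕ} (a : Fin n → ℕ) (ha : ∀ j, 0 < a j) (j : Fin n) : 0 < Aw a j := by
  simp only [Aw]
  exact_mod_cast ha j

section RD

variable (r : ℕ) (a : Fin n → ℕ) (k : Fin n)

lemma rd_apply_ne (m : Fin n → ℤ) {j : Fin n} (hj : j ≠ k) :
    roundDown n r a k m j = m j := Function.update_of_ne hj _ _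

lemma rd_apply_k (m : Fin n → ℤ) :
    roundDown n r a k m k = Int.fdiv (σv (Aw a) m) (r : ℤ) := Function.update_self _ _ _

lemma rd_fdiv (hr : 0 < r) (m : Fin n → ℤ) :
    roundDown n r a k m k = σv (Aw a) m / (r : ℤ) := by
  rw [rd_apply_k, Int.fdiv_eq_ediv_of_nonneg _ (by positivity)]

lemma rd_zero : roundDown n r a k (0 : Fin n → ℤ) = 0 := by
  unfold roundDown
  rw [show (∑ j, (a j : ℤ) * (0 : Fin n → ℤ) j) = 0 by simp]
  simp

lemma rd_add (hr : 0 < r) (m u : Fin n → ℤ) (hu : (r : ℤ) ∣ σv (Aw a) u) :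
    roundDown n r a k (m + u) = roundDown n r a k m + roundDown n r a k u := by
  obtain ⟨c, hc⟩ := hu
  have hrne : (r : ℤ) ≠ 0 := by positivity
  funext j
  rcases eq_or_ne j k with h | h
  · rw [h]
    have h1 : σv (Aw a) (m + u) = σv (Aw a) m + (r : ℤ) * c := by
      rw [σv_add, hc]
    show roundDown n r a k (m + u) k = roundDown n r a k m k + roundDown n r a k u k
    rw [rd_fdiv r a k hr, rd_fdiv r a k hr, rd_fdiv r a k hr, h1, hc,
      Int.add_mul_ediv_left _ _ hrne, Int.mul_ediv_cancel_left _ hrne]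
  · show roundDown n r a k (m + u) j = roundDown n r a k m j + roundDown n r a k u j
    rw [rd_apply_ne r a k _ h, rd_apply_ne r a k _ h, rd_apply_ne r a k _ h]
    rfl

lemma rd_mul_self (hr : 0 < r) (u : Fin n → ℤ) (hu : (r : ℤ) ∣ σv (Aw a) u) :
    (r : ℤ) * roundDown n r a k u k = σv (Aw a) u := by
  rw [rd_fdiv r a k hr]
  exact Int.mul_ediv_cancel' hu

lemma rd_inj (hr : 0 < r) (hak : 0 < a k) (u v : Fin n → ℤ)
    (hu : (r : ℤ) ∣ σv (Aw a) u) (hv : (r : ℤ) ∣ σv (Aw a) v)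
    (h : roundDown n r a k u = roundDown n r a k v) : u = v := by
  have hne : ∀ j, j ≠ k → u j = v j := by
    intro j hj
    have := congrFun h j
    rwa [rd_apply_ne r a k _ hj, rd_apply_ne r a k _ hj] at this
  have hσ : σv (Aw a) u = σv (Aw a) v := by
    have := congrFun h k
    rw [← rd_mul_self r a k hr u hu, ← rd_mul_self r a k hr v hv, this]
  have hsum : ∑ j ∈ Finset.univ.erase k, (Aw a) j * u j
      = ∑ j ∈ Finset.univ.erase k, (Aw a) j * v j := by
    apply Finset.sum_congr rfl
    intro j hj
    rw [hne j (Finset.ne_of_mem_erase hj)]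
  have hk : (Aw a) k * u k = (Aw a) k * v k := by
    have h1 := σv_split (Aw a) u k
    have h2 := σv_split (Aw a) v k
    omega
  have hak' : (Aw a) k ≠ 0 := by
    simp only [Aw]
    positivity
  have := mul_left_cancel₀ hak' hk
  funext j
  rcases eq_or_ne j k with h | h
  · subst h; exact this
  · exact hne j h

/-- σb of roundDown -/
lemma σb_rd (hr : 0 < r) (m : Fin n → ℤ) :
    σv (Bw r a k) (roundDown n r a k m)
      = σv (Aw a) m - (a k : ℤ) * m k - (r : ℤ) * (roundDown n r a k m k) := by
  rw [σv_split (Bw r a k) _ k, σv_split (Aw a) m k]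
  have h1 : ∑ j ∈ Finset.univ.erase k, (Bw r a k) j * (roundDown n r a k m) j
      = ∑ j ∈ Finset.univ.erase k, (Aw a) j * m j := by
    apply Finset.sum_congr rfl
    intro j hj
    have hj' := Finset.ne_of_mem_erase hj
    rw [rd_apply_ne r a k _ hj']
    simp [Bw, Aw, hj']
  rw [h1]
  have h2 : Bw r a k k = -(r : ℤ) := by simp [Bw]
  rw [h2]
  simp only [Aw]
  ring

end RD

end Stmt7

namespace Stmt7

variable {n : ℕ}

lemma ediv_bounds (d : ℤ) (hd : 0 < d) (y : ℤ) : y - d < d * (y / d) ∧ d * (y / d) ≤ y := by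
  have h1 := Int.emod_lt_of_pos y hd
  have h2 := Int.mul_ediv_add_emod y d
  have h3 := Int.emod_nonneg y (ne_of_gt hd)
  constructor <;> linarith

lemma exists_window (ak C X : ℤ) (hak : 0 < ak) :
    ∃ t : ℤ, X ≤ C + ak * t ∧ C + ak * t < X + ak := by
  refine ⟨(X - C + ak - 1) / ak, ?_, ?_⟩
  · have := (ediv_bounds ak hak (X - C + ak - 1)).1
    linarith
  · have := (ediv_bounds ak hak (X - C + ak - 1)).2
    linarith

lemma fdiv_eq_of (rr : ℤ) (hr : 0 < rr) (x s : ℤ) (h1 : rr * s ≤ x) (h2 : x < rr * s + rr) :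
    Int.fdiv x rr = s := by
  rw [Int.fdiv_eq_ediv_of_nonneg _ (le_of_lt hr)]
  have hx : x = (x - rr * s) + rr * s := by ring
  rw [hx, Int.add_mul_ediv_left _ s (ne_of_gt hr),
    Int.ediv_eq_zero_of_lt (by linarith) (by linarith), zero_add]

/-- Telescoping: any generator decomposes into single-step generators. -/
lemma telescope (s : ℕ) (b : Fin n → ℤ) (Γ : Set (Fin n → ℤ))
    (hbij : Set.BijOn (wmap n s b) Γ Set.univ)
    (T : AddSubmonoid (Fin n → ℤ))
    (hT : ∀ (i : Fin n), ∀ δ ∈ Γ, ∀ δ'' ∈ Γ,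
      wmap n s b (δ + Pi.single i 1) = wmap n s b δ'' → δ + Pi.single i 1 - δ'' ∈ T) :
    ∀ (N : ℕ) (p : Fin n → ℕ), (∑ j, p j) = N → ∀ δ ∈ Γ, ∀ δ' ∈ Γ,
      wmap n s b (natVec p + δ) = wmap n s b δ' → natVec p + δ - δ' ∈ T := by
  intro N
  induction N with
  | zero =>
    intro p hp δ hδ δ' hδ' hw
    have hp0 : ∀ j, p j = 0 := by
      intro j
      by_contra h
      have h1 : 0 < ∑ j, p j := Finset.sum_pos' (fun _ _ => Nat.zero_le _)
        ⟨j, Finset.mem_univ j, Nat.pos_of_ne_zero h⟩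
      omega
    have hnv : natVec p = 0 := funext fun j => by simp [natVec, hp0 j]
    rw [hnv, zero_add] at hw ⊢
    rw [hbij.injOn hδ hδ' hw]
    simpa using T.zero_mem
  | succ N ih =>
    intro p hp δ hδ δ' hδ' hw
    have hex : ∃ i, p i ≠ 0 := by
      by_contra h
      push_neg at h
      rw [Finset.sum_eq_zero (fun j _ => h j)] at hp
      omega
    obtain ⟨i, hi⟩ := hex
    set p' : Fin n → ℕ := fun j => p j - (if j = i then 1 else 0) with hp'def
    have hpp' : ∀ j, p j = p' j + (if j = i then 1 else 0) := by
      intro j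
      rcases eq_or_ne j i with h | h <;> simp [hp'def, h] <;> omega
    have hsum : ∑ j, p' j = N := by
      have h1 : ∑ j, p j = (∑ j, p' j) + ∑ j, (if j = i then 1 else 0) := by
        rw [← Finset.sum_add_distrib]
        exact Finset.sum_congr rfl (fun j _ => hpp' j)
      rw [Finset.sum_ite_eq' Finset.univ i (fun _ => 1), if_pos (Finset.mem_univ i)] at h1
      omega
    have hnv : natVec p = natVec p' + Pi.single i 1 := by
      funext j
      rcases eq_or_ne j i with h | h
      · rw [h]
        simp [natVec, hpp' i]
      · simp [natVec, hpp' j, h, Pi.single_apply]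
    obtain ⟨δ₁, hδ₁, hwδ₁⟩ := hbij.surjOn (Set.mem_univ (wmap n s b (natVec p' + δ)))
    have h1 : natVec p' + δ - δ₁ ∈ T := ih p' hsum δ hδ δ₁ hδ₁ hwδ₁.symm
    have hwstep : wmap n s b (δ₁ + Pi.single i 1) = wmap n s b δ' := by
      rw [← hw, hnv]
      rw [wmap_eq_iff] at hwδ₁ ⊢
      have e1 : σv b (natVec p' + Pi.single i 1 + δ) - σv b (δ₁ + Pi.single i 1)
          = σv b (natVec p' + δ) - σv b δ₁ := by
        rw [σv_add, σv_add, σv_add, σv_add]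
        ring
      rw [e1]
      exact hwδ₁
    have h2 : δ₁ + Pi.single i 1 - δ' ∈ T := hT i δ₁ hδ₁ δ' hδ' hwstep
    have h3 := T.add_mem h1 h2
    have e2 : natVec p + δ - δ' = (natVec p' + δ - δ₁) + (δ₁ + Pi.single i 1 - δ') := by
      rw [hnv]
      abel
    rw [e2]
    exact h3

end Stmt7

namespace Stmt7

variable {n : ℕ}

lemma fwd (r : ℕ) (hr : 0 < r) (a : Fin n → ℕ) (k : Fin n)
    (Γ' : Set (Fin n → ℤ)) (d : Fin n → ℤ)
    (hd : d ∈ brickGens n r (Aw a) {m | roundDown n r a k m ∈ Γ'}) :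
    (r : ℤ) ∣ σv (Aw a) d ∧ roundDown n r a k d ∈ brickGens n (a k) (Bw r a k) Γ' := by
  obtain ⟨p, γ, hγ, γ', hγ', hwt, hdeq⟩ := hd
  have hrpos : (0 : ℤ) < (r : ℤ) := by positivity
  have hinv : (r : ℤ) ∣ σv (Aw a) d := by
    rw [wmap_eq_iff] at hwt
    have : σv (Aw a) d = -(σv (Aw a) γ' - σv (Aw a) (natVec p + γ)) := by
      rw [hdeq, σv_sub, σv_add]
      ring
    rw [this]
    exact dvd_neg.mpr hwt
  refine ⟨hinv, ?_⟩
  have hmono : roundDown n r a k γ k ≤ roundDown n r a k (natVec p + γ) k := by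
    rw [rd_fdiv r a k hr, rd_fdiv r a k hr]
    apply Int.ediv_le_ediv hrpos
    rw [σv_add]
    have := σv_natVec_nonneg a p
    linarith
  set q : Fin n → ℕ := fun j => if j = k
    then (roundDown n r a k (natVec p + γ) k - roundDown n r a k γ k).toNat
    else p j with hqdef
  have hq : natVec q = roundDown n r a k (natVec p + γ) - roundDown n r a k γ := by
    funext j
    rcases eq_or_ne j k with h | h
    · rw [h]
      have hqk : q k = (roundDown n r a k (natVec p + γ) k - roundDown n r a k γ k).toNat := by
        simp [hqdef]
      show ((q k : ℤ)) = (roundDown n r a k (natVec p + γ) - roundDown n r a k γ) k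
      rw [hqk, Int.toNat_of_nonneg (by linarith)]
      rfl
    · have hqj : q j = p j := by simp [hqdef, h]
      show ((q j : ℤ)) = (roundDown n r a k (natVec p + γ) - roundDown n r a k γ) j
      have : (roundDown n r a k (natVec p + γ) - roundDown n r a k γ) j
          = roundDown n r a k (natVec p + γ) j - roundDown n r a k γ j := rfl
      rw [this, rd_apply_ne r a k _ h, rd_apply_ne r a k _ h, hqj]
      show (p j : ℤ) = (natVec p + γ) j - γ j
      simp [natVec]
  have hd_dec : natVec p + γ = γ' + d := by
    rw [hdeq]; abel
  have hφadd : roundDown n r a k (natVec p + γ)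
      = roundDown n r a k γ' + roundDown n r a k d := by
    rw [hd_dec]
    exact rd_add r a k hr γ' d hinv
  have hσb : σv (Bw r a k) (roundDown n r a k d) = -((a k : ℤ) * d k) := by
    rw [σb_rd r a k hr d, rd_mul_self r a k hr d hinv]
    ring
  refine ⟨q, roundDown n r a k γ, hγ, roundDown n r a k γ', hγ', ?_, ?_⟩
  · rw [wmap_eq_iff]
    have e1 : natVec q + roundDown n r a k γ = roundDown n r a k γ' + roundDown n r a k d := by
      rw [hq, ← hφadd]
      abel
    rw [e1, σv_add]
    have : σv (Bw r a k) (roundDown n r a k γ') -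
        (σv (Bw r a k) (roundDown n r a k γ') + σv (Bw r a k) (roundDown n r a k d))
        = (a k : ℤ) * d k := by rw [hσb]; ring
    rw [this]
    exact dvd_mul_right _ _
  · rw [hq, hφadd]
    abel

end Stmt7

namespace Stmt7

variable {n : ℕ}

lemma lift (r : ℕ) (hr : 0 < r) (a : Fin n → ℕ) (ha : ∀ j, 0 < a j) (k : Fin n)
    (hak : ((a k : ℕ) : ℤ) ≤ (r : ℤ))
    (hgood : ∀ i : Fin n, i ≠ k → ((a i : ℕ) : ℤ) + ((a k : ℕ) : ℤ) ≤ (r : ℤ))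
    (Γ' : Set (Fin n → ℤ)) (i : Fin n) (δ δ'' : Fin n → ℤ)
    (hδm : δ ∈ Γ') (hδ''m : δ'' ∈ Γ')
    (hw : wmap n (a k) (Bw r a k) (δ + Pi.single i 1) = wmap n (a k) (Bw r a k) δ'') :
    ∃ u ∈ brickGens n r (Aw a) {m | roundDown n r a k m ∈ Γ'},
      (r : ℤ) ∣ σv (Aw a) u ∧ roundDown n r a k u = δ + Pi.single i 1 - δ'' := by
  have hrpos : (0:ℤ) < (r:ℤ) := by positivity
  have hakpos : (0:ℤ) < ((a k : ℕ) : ℤ) := by exact_mod_cast ha k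
  set e : Fin n → ℤ := δ + Pi.single i 1 - δ'' with hedef
  have hwB : ((a k : ℕ) : ℤ) ∣ σv (Bw r a k) e := by
    rw [wmap_eq_iff] at hw
    have h0 : σv (Bw r a k) e
        = -(σv (Bw r a k) δ'' - σv (Bw r a k) (δ + Pi.single i 1)) := by
      rw [hedef, σv_sub]; ring
    rw [h0]; exact dvd_neg.mpr hw
  set u : Fin n → ℤ := Function.update e k (-(σv (Bw r a k) e / ((a k : ℕ) : ℤ))) with hudef
  have hu_ne : ∀ j, j ≠ k → u j = e j := fun j hj => Function.update_of_ne hj _ _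
  have hu_k : ((a k:ℕ):ℤ) * u k = -(σv (Bw r a k) e) := by
    rw [hudef, Function.update_self, mul_neg, Int.mul_ediv_cancel' hwB]
  have hBsplit : σv (Bw r a k) e
      = -(r:ℤ) * e k + ∑ j ∈ Finset.univ.erase k, Aw a j * e j := by
    rw [σv_split (Bw r a k) e k]
    congr 1
    · simp [Bw]
    · apply Finset.sum_congr rfl
      intro j hj
      simp [Bw, Aw, Finset.ne_of_mem_erase hj]
  have hAu : σv (Aw a) u = (r:ℤ) * e k := by
    rw [σv_split (Aw a) u k]
    have h1 : ∑ j ∈ Finset.univ.erase k, Aw a j * u j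
        = ∑ j ∈ Finset.univ.erase k, Aw a j * e j := by
      apply Finset.sum_congr rfl
      intro j hj; rw [hu_ne j (Finset.ne_of_mem_erase hj)]
    rw [h1]
    have hAk : Aw a k = ((a k:ℕ):ℤ) := rfl
    rw [hAk]
    linarith [hBsplit, hu_k]
  have huinv : (r:ℤ) ∣ σv (Aw a) u := ⟨e k, hAu⟩
  have hφu : roundDown n r a k u = e := by
    funext j
    rcases eq_or_ne j k with h | h
    · rw [h, rd_apply_k, hAu]
      exact fdiv_eq_of _ hrpos _ (e k) le_rfl (by linarith)
    · rw [rd_apply_ne r a k _ h, hu_ne j h]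
  -- the preimage γ' of δ'' with maximal remainder
  set C'' := ∑ j ∈ Finset.univ.erase k, Aw a j * δ'' j with hC''
  obtain ⟨t', ht'1, ht'2⟩ := exists_window ((a k:ℕ):ℤ) C''
    ((r:ℤ) * δ'' k + (r:ℤ) - ((a k:ℕ):ℤ)) hakpos
  set γ' : Fin n → ℤ := Function.update δ'' k t' with hγ'def
  have hσγ' : σv (Aw a) γ' = ((a k:ℕ):ℤ) * t' + C'' := σv_update (Aw a) δ'' k t'
  have hφγ' : roundDown n r a k γ' = δ'' := by
    funext j
    rcases eq_or_ne j k with h | h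
    · rw [h, rd_apply_k, hσγ']
      exact fdiv_eq_of _ hrpos _ (δ'' k) (by linarith) (by linarith)
    · rw [rd_apply_ne r a k _ h, hγ'def, Function.update_of_ne h]
  have hγ'mem : γ' ∈ {m | roundDown n r a k m ∈ Γ'} := by
    rw [Set.mem_setOf_eq, hφγ']; exact hδ''m
  -- m0 = γ' + u
  set m0 : Fin n → ℤ := γ' + u with hm0
  have hm0ne : ∀ j, j ≠ k → m0 j = δ j + (Pi.single i 1 : Fin n → ℤ) j := by
    intro j hj
    show γ' j + u j = _
    rw [hγ'def, Function.update_of_ne hj, hu_ne j hj]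
    show δ'' j + (δ j + (Pi.single i 1 : Fin n → ℤ) j - δ'' j) = _
    ring
  set Cδ := ∑ j ∈ Finset.univ.erase k, Aw a j * δ j with hCδ
  set E := ∑ j ∈ Finset.univ.erase k, Aw a j * (Pi.single i 1 : Fin n → ℤ) j with hE
  have hEsum : ∑ j ∈ Finset.univ.erase k, Aw a j * m0 j = Cδ + E := by
    rw [hCδ, hE, ← Finset.sum_add_distrib]
    apply Finset.sum_congr rfl
    intro j hj
    rw [hm0ne j (Finset.ne_of_mem_erase hj)]
    ring
  have hσm : σv (Aw a) m0 = ((a k:ℕ):ℤ) * t' + C'' + (r:ℤ) * e k := by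
    rw [hm0, σv_add, hσγ', hAu]
  have hsplitm : σv (Aw a) m0 = ((a k:ℕ):ℤ) * m0 k + (Cδ + E) := by
    have hAk : Aw a k = ((a k:ℕ):ℤ) := rfl
    rw [σv_split (Aw a) m0 k, hEsum, hAk]
  have hre : (r:ℤ) * e k = (r:ℤ) * δ k + (r:ℤ) * (Pi.single i 1 : Fin n → ℤ) k - (r:ℤ) * δ'' k := by
    show (r:ℤ) * (δ k + (Pi.single i 1 : Fin n → ℤ) k - δ'' k) = _
    ring
  have hkey : (r:ℤ) * δ k ≤ Cδ + ((a k:ℕ):ℤ) * m0 k := by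
    rcases eq_or_ne i k with hik | hik
    · have hE0 : E = 0 := by
        rw [hE]; apply Finset.sum_eq_zero; intro j hj
        have hjk : j ≠ i := by rw [hik]; exact Finset.ne_of_mem_erase hj
        rw [Pi.single_eq_of_ne hjk, mul_zero]
      have hsk : (Pi.single i 1 : Fin n → ℤ) k = (1:ℤ) := by rw [← hik]; exact Pi.single_eq_same i 1
      rw [hsk] at hre
      rw [hE0] at hsplitm
      linarith [hsplitm, hσm, ht'1, hre, hak, hrpos]
    · have hEi : E = ((a i:ℕ):ℤ) := by
        rw [hE, Finset.sum_eq_single i]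
        · rw [Pi.single_eq_same, mul_one]; rfl
        · intro j _ hji; rw [Pi.single_eq_of_ne hji, mul_zero]
        · intro hni
          exact absurd (Finset.mem_erase.mpr ⟨hik, Finset.mem_univ i⟩) hni
      have hsk : (Pi.single i 1 : Fin n → ℤ) k = (0:ℤ) := Pi.single_eq_of_ne (Ne.symm hik) 1
      rw [hsk] at hre
      rw [hEi] at hsplitm
      have hgi := hgood i hik
      linarith [hsplitm, hσm, ht'1, hre]
  -- the preimage γ of δ below m0
  obtain ⟨t, ht1, ht2⟩ := exists_window ((a k:ℕ):ℤ) Cδ ((r:ℤ) * δ k) hakpos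
  have htm : t ≤ m0 k := by
    have h1 : ((a k:ℕ):ℤ) * t < ((a k:ℕ):ℤ) * (m0 k + 1) := by
      rw [mul_add, mul_one]; linarith
    have := lt_of_mul_lt_mul_left h1 (le_of_lt hakpos)
    omega
  set γ : Fin n → ℤ := Function.update δ k t with hγdef
  have hσγ : σv (Aw a) γ = ((a k:ℕ):ℤ) * t + Cδ := σv_update (Aw a) δ k t
  have hφγ : roundDown n r a k γ = δ := by
    funext j
    rcases eq_or_ne j k with h | h
    · rw [h, rd_apply_k, hσγ]
      exact fdiv_eq_of _ hrpos _ (δ k) (by linarith) (by linarith)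
    · rw [rd_apply_ne r a k _ h, hγdef, Function.update_of_ne h]
  have hγmem : γ ∈ {m | roundDown n r a k m ∈ Γ'} := by
    rw [Set.mem_setOf_eq, hφγ]; exact hδm
  have hγle : ∀ j, γ j ≤ m0 j := by
    intro j
    rcases eq_or_ne j k with h | h
    · rw [h, hγdef, Function.update_self]; exact htm
    · rw [hγdef, Function.update_of_ne h, hm0ne j h]
      have h0 : (0:ℤ) ≤ (Pi.single i 1 : Fin n → ℤ) j := by
        rcases eq_or_ne j i with h2 | h2
        · rw [h2, Pi.single_eq_same]; norm_num
        · rw [Pi.single_eq_of_ne h2]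
      linarith
  set p : Fin n → ℕ := fun j => (m0 j - γ j).toNat with hpdef
  have hnvp : natVec p = m0 - γ := by
    funext j
    show ((m0 j - γ j).toNat : ℤ) = (m0 - γ) j
    rw [Int.toNat_of_nonneg (by linarith [hγle j])]; rfl
  have hsum : natVec p + γ = m0 := by rw [hnvp]; abel
  have hueq : u = natVec p + γ - γ' := by rw [hsum, hm0]; abel
  refine ⟨u, ⟨p, γ, hγmem, γ', hγ'mem, ?_, hueq⟩, huinv, by rw [hφu]⟩
  rw [wmap_eq_iff, hsum]
  have h2 : σv (Aw a) γ' - σv (Aw a) m0 = -((r:ℤ) * e k) := by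
    rw [hm0, σv_add, hAu]; ring
  rw [h2]
  exact dvd_neg.mpr ⟨e k, rfl⟩

end Stmt7

/-- For the natural inverse `Γ = φ_k⁻¹(Γ')` of a `G_k`-brick `Γ'`: every element of
`S(Γ)` is `G`-invariant, and `φ_k` restricts to a bijection from `S(Γ)` onto `S(Γ')`;
in particular `φ_k(S(Γ)) = S(Γ')`. -/
theorem stmt_7 (n : ℕ) (hn : 2 ≤ n) (r : ℕ) (hr : 1 ≤ r) (a : Fin n → ℕ)
    (ha : ∀ j, 0 < a j) (k : Fin n)
    (hgcd : Nat.gcd (Finset.univ.gcd a) r = 1)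
    (hgood : ∀ i j : Fin n, i ≠ j → a i + a j ≤ r)
    (Γ' : Set (Fin n → ℤ))
    (hΓ' : IsBrick n (a k) (fun j => if j = k then -(r : ℤ) else (a j : ℤ)) Γ') :
    (∀ u ∈ SGamma n r (fun j => (a j : ℤ)) {m | roundDown n r a k m ∈ Γ'},
        (r : ℤ) ∣ ∑ j, (a j : ℤ) * u j) ∧
    Set.BijOn (roundDown n r a k)
      (SGamma n r (fun j => (a j : ℤ)) {m | roundDown n r a k m ∈ Γ'} : Set (Fin n → ℤ))
      (SGamma n (a k) (fun j => if j = k then -(r : ℤ) else (a j : ℤ)) Γ' : Set (Fin n → ℤ)) ∧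
    roundDown n r a k ''
        (SGamma n r (fun j => (a j : ℤ)) {m | roundDown n r a k m ∈ Γ'} : Set (Fin n → ℤ)) =
      (SGamma n (a k) (fun j => if j = k then -(r : ℤ) else (a j : ℤ)) Γ' : Set (Fin n → ℤ)) := by
  classical
  have hrpos : 0 < r := hr
  have hrZ : (0:ℤ) < (r:ℤ) := by exact_mod_cast hr
  have hnt : Nontrivial (Fin n) := Fin.nontrivial_iff_two_le.mpr hn
  obtain ⟨j0, hj0⟩ := exists_ne k
  have hakr : ((a k:ℕ):ℤ) ≤ (r:ℤ) := by
    have h1 : (a j0 : ℤ) + (a k : ℤ) ≤ (r:ℤ) := by exact_mod_cast hgood j0 k hj0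
    have h2 : (1:ℤ) ≤ (a j0 : ℤ) := by exact_mod_cast ha j0
    linarith
  have hgood' : ∀ i : Fin n, i ≠ k → ((a i:ℕ):ℤ) + ((a k:ℕ):ℤ) ≤ (r:ℤ) := by
    intro i hi; exact_mod_cast hgood i k hi
  set Γ : Set (Fin n → ℤ) := {m | roundDown n r a k m ∈ Γ'} with hΓdef
  set S' := SGamma n (a k) (fun j => if j = k then -(r:ℤ) else (a j:ℤ)) Γ' with hS'def
  set S := SGamma n r (fun j => (a j:ℤ)) Γ with hSdef
  let T2 : AddSubmonoid (Fin n → ℤ) :=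
    { carrier := {u | (r:ℤ) ∣ Stmt7.σv (Stmt7.Aw a) u ∧ roundDown n r a k u ∈ S'}
      zero_mem' := ⟨by simp [Stmt7.σv_zero], by
        rw [Stmt7.rd_zero r a k]; exact S'.zero_mem⟩
      add_mem' := by
        rintro x y ⟨hx1, hx2⟩ ⟨hy1, hy2⟩
        refine ⟨by rw [Stmt7.σv_add]; exact dvd_add hx1 hy1, ?_⟩
        rw [Stmt7.rd_add r a k hrpos x y hy1]
        exact S'.add_mem hx2 hy2 }
  have hST2 : S ≤ T2 := by
    apply AddSubmonoid.closure_le.mpr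
    intro d hd
    have hd' : d ∈ brickGens n r (Stmt7.Aw a) Γ := hd
    obtain ⟨h1, h2⟩ := Stmt7.fwd r hrpos a k Γ' d hd'
    exact ⟨h1, AddSubmonoid.subset_closure h2⟩
  let T : AddSubmonoid (Fin n → ℤ) :=
    { carrier := {x | ∃ u, u ∈ S ∧ (r:ℤ) ∣ Stmt7.σv (Stmt7.Aw a) u ∧ roundDown n r a k u = x}
      zero_mem' := ⟨0, zero_mem _, by simp [Stmt7.σv_zero], Stmt7.rd_zero r a k⟩
      add_mem' := by
        rintro x y ⟨u, hu, hu1, hu2⟩ ⟨v, hv, hv1, hv2⟩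
        exact ⟨u + v, add_mem hu hv, by rw [Stmt7.σv_add]; exact dvd_add hu1 hv1,
          by rw [Stmt7.rd_add r a k hrpos u v hv1, hu2, hv2]⟩ }
  have hS'T : S' ≤ T := by
    apply AddSubmonoid.closure_le.mpr
    intro x hx
    obtain ⟨p, δ, hδ, δ', hδ', hwx, hxeq⟩ := hx
    have hbij := hΓ'.1.2.1
    have hT : ∀ (i : Fin n), ∀ δ₁ ∈ Γ', ∀ δ₂ ∈ Γ',
        wmap n (a k) (fun j => if j = k then -(r:ℤ) else (a j:ℤ)) (δ₁ + Pi.single i 1)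
          = wmap n (a k) (fun j => if j = k then -(r:ℤ) else (a j:ℤ)) δ₂ →
        δ₁ + Pi.single i 1 - δ₂ ∈ T := by
      intro i δ₁ hδ₁ δ₂ hδ₂ hwstep
      obtain ⟨u, hugen, huinv, hueq⟩ :=
        Stmt7.lift r hrpos a ha k hakr hgood' Γ' i δ₁ δ₂ hδ₁ hδ₂ hwstep
      exact ⟨u, AddSubmonoid.subset_closure hugen, huinv, hueq⟩
    have := Stmt7.telescope (a k) (fun j => if j = k then -(r:ℤ) else (a j:ℤ)) Γ'
      hbij T hT (∑ j, p j) p rfl δ hδ δ' hδ' hwx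
    rw [hxeq]; exact this
  have hA : ∀ u ∈ S, (r : ℤ) ∣ ∑ j, (a j : ℤ) * u j := fun u hu => (hST2 hu).1
  have hmapsto : Set.MapsTo (roundDown n r a k) (S : Set (Fin n → ℤ)) (S' : Set (Fin n → ℤ)) :=
    fun u hu => (hST2 hu).2
  have hinj : Set.InjOn (roundDown n r a k) (S : Set (Fin n → ℤ)) := by
    intro u hu v hv h
    exact Stmt7.rd_inj r a k hrpos (ha k) u v (hST2 hu).1 (hST2 hv).1 h
  have hsurj : Set.SurjOn (roundDown n r a k) (S : Set (Fin n → ℤ)) (S' : Set (Fin n → ℤ)) := by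
    intro x hx
    obtain ⟨u, hu, _, hueq⟩ := hS'T hx
    exact ⟨u, hu, hueq⟩
  have hbijon : Set.BijOn (roundDown n r a k) (S : Set (Fin n → ℤ)) (S' : Set (Fin n → ℤ)) :=
    ⟨hmapsto, hinj, hsurj⟩
  exact ⟨hA, hbijon, hbijon.image_eq⟩
end

section
/- Assume n ≥ 2, gcd(a_1, …, a_n, r) = 1, and that the star subdivision at v = (1/r)(a_1, …, a_n) is good. Let Γ′ ⊆ ℤ^n be a G_k-brick and set Γ := φ_k^{−1}(Γ′). Then for every m ∈ ℤ^n one has wt_{Γ′}(φ_k(m)) = φ_k(wt_Γ(m)), where wt_Γ(m) is the unique element of Γ with the same G-weight as m and wt_{Γ′}(c) is the unique element of Γ′ with the same G_k-weight as c. -/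
/-! Since `∑_{j ≠ k} a_j m_j - r ⌊(∑_j a_j m_j) / r⌋ = (∑_j a_j m_j mod r) - a_k m_k`,
the `G_k`-weight of `φ_k(m)` is `∑_j a_j m_j mod r` read modulo `a_k`, so it only depends on the
`G`-weight of `m`. Hence `φ_k(wt_Γ(m)) ∈ Γ'` has the `G_k`-weight of `φ_k(m)`, and it equals
`wt_{Γ'}(φ_k(m))` because the weight is injective on the brick `Γ'`. -/

open scoped BigOperators

open Finset

/-- The weight vector `b` with `wmap n (a k) b = wt_k`. -/
def gkWeights {n : ℕ} (r : ℕ) (a : Fin n → ℕ) (k : Fin n) : Fin n → ℤ :=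
  fun j => if j = k then -(r : ℤ) else (a j : ℤ)

theorem IsPrebrick.eq_of_wmap_eq {n s : ℕ} {b : Fin n → ℤ} {Γ : Set (Fin n → ℤ)}
    (hΓ : IsPrebrick n s b Γ) {x y : Fin n → ℤ} (hx : x ∈ Γ) (hy : y ∈ Γ)
    (hxy : wmap n s b x = wmap n s b y) : x = y :=
  hΓ.2.1.injOn hx hy hxy

section RoundDown

variable {n : ℕ} (r : ℕ) (a : Fin n → ℕ) (k : Fin n)

theorem sum_gkWeights_mul_roundDown (m : Fin n → ℤ) :
    ∑ j, gkWeights r a k j * roundDown n r a k m j =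
      (∑ j, (a j : ℤ) * m j) % r - a k * m k := by
  have hrest : ∑ j ∈ {k}ᶜ, gkWeights r a k j * roundDown n r a k m j =
      ∑ j, (a j : ℤ) * m j - a k * m k := by
    rw [eq_sub_iff_add_eq', Fintype.sum_eq_add_sum_compl k (fun j => (a j : ℤ) * m j)]
    congr 1
    refine sum_congr rfl fun j hj => ?_
    have hjk : j ≠ k := by simpa using hj
    simp [gkWeights, roundDown, hjk]
  rw [Fintype.sum_eq_add_sum_compl k, hrest, Int.emod_def]
  simp only [gkWeights, ↓reduceIte, roundDown, Nat.cast_nonneg, Int.fdiv_eq_ediv_of_nonneg,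
    Function.update_self, neg_mul]
  ring

theorem wmap_gkWeights_roundDown (m : Fin n → ℤ) :
    wmap n (a k) (gkWeights r a k) (roundDown n r a k m) =
      (((∑ j, (a j : ℤ) * m j) % r : ℤ) : ZMod (a k)) := by
  rw [wmap, sum_gkWeights_mul_roundDown]
  push_cast
  simp

theorem wmap_gkWeights_roundDown_congr {m m' : Fin n → ℤ}
    (h : wmap n r (fun j => (a j : ℤ)) m = wmap n r (fun j => (a j : ℤ)) m') :
    wmap n (a k) (gkWeights r a k) (roundDown n r a k m) =
      wmap n (a k) (gkWeights r a k) (roundDown n r a k m') := by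
  rw [wmap_gkWeights_roundDown, wmap_gkWeights_roundDown,
    (ZMod.intCast_eq_intCast_iff' _ _ r).mp h]

end RoundDown

theorem stmt_8_general (n : ℕ) (r : ℕ) (a : Fin n → ℕ)
    (k : Fin n)
    (Γ' : Set (Fin n → ℤ))
    (hΓ' : IsBrick n (a k) (fun j => if j = k then -(r : ℤ) else (a j : ℤ)) Γ')
    (m g g' : Fin n → ℤ)
    (hg : g ∈ {m | roundDown n r a k m ∈ Γ'})
    (hgwt : wmap n r (fun j => (a j : ℤ)) g = wmap n r (fun j => (a j : ℤ)) m)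
    (hg' : g' ∈ Γ')
    (hg'wt : wmap n (a k) (fun j => if j = k then -(r : ℤ) else (a j : ℤ)) g' =
      wmap n (a k) (fun j => if j = k then -(r : ℤ) else (a j : ℤ)) (roundDown n r a k m)) :
    g' = roundDown n r a k g :=
  hΓ'.1.eq_of_wmap_eq hg' hg (hg'wt.trans (wmap_gkWeights_roundDown_congr r a k hgwt.symm))

/-- For the natural inverse `Γ = φ_k⁻¹(Γ')` of a `G_k`-brick `Γ'`, and any `m ∈ ℤⁿ`:
if `g` is the element of `Γ` with the same `G`-weight as `m` (i.e. `g = wt_Γ(m)`) and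
`g'` is the element of `Γ'` with the same `G_k`-weight as `φ_k(m)` (i.e.
`g' = wt_{Γ'}(φ_k(m))`), then `g' = φ_k(g)`, i.e. `wt_{Γ'}(φ_k(m)) = φ_k(wt_Γ(m))`. -/
theorem stmt_8 (n : ℕ) (hn : 2 ≤ n) (r : ℕ) (hr : 1 ≤ r) (a : Fin n → ℕ)
    (ha : ∀ j, 0 < a j) (k : Fin n)
    (hgcd : Nat.gcd (Finset.univ.gcd a) r = 1)
    (hgood : ∀ i j : Fin n, i ≠ j → a i + a j ≤ r)
    (Γ' : Set (Fin n → ℤ))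
    (hΓ' : IsBrick n (a k) (fun j => if j = k then -(r : ℤ) else (a j : ℤ)) Γ')
    (m g g' : Fin n → ℤ)
    (hg : g ∈ {m | roundDown n r a k m ∈ Γ'})
    (hgwt : wmap n r (fun j => (a j : ℤ)) g = wmap n r (fun j => (a j : ℤ)) m)
    (hg' : g' ∈ Γ')
    (hg'wt : wmap n (a k) (fun j => if j = k then -(r : ℤ) else (a j : ℤ)) g' =
      wmap n (a k) (fun j => if j = k then -(r : ℤ) else (a j : ℤ)) (roundDown n r a k m)) :
    g' = roundDown n r a k g :=
  stmt_8_general n r a k Γ' hΓ' m g g' hg hgwt hg' hg'wt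
end

section
/- Let Γ ⊆ ℤ^n be a wt-prebrick and let A ⊆ Γ. Then the following are equivalent: (1) the images in C(Γ) of the monomials x^γ for γ ∈ A form a ℂ-basis of a ℂ[x_1, …, x_n]-submodule of C(Γ); (2) for every γ ∈ A and every i ∈ {1, …, n}, if γ + e_i ∈ Γ then γ + e_i ∈ A. -/
/-!
Condition (3) says that `Γ` is order-convex in `ℤⁿ`. Hence no point of `Γ` lies above a
point of `B(Γ)`, while every point above a point of `Γ` lies in `Γ` or above a point of
`B(Γ)`. Since every Laurent polynomial in `⟨B(Γ)⟩` is supported above `B(Γ)`, the classes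
of `x^γ`, `γ ∈ Γ`, are linearly independent in `C(Γ)`, and `x^p · x^γ` is the class of
`x^(γ + p)` when `γ + p ∈ Γ` and zero otherwise. So the `ℂ`-span of the classes of `x^γ`,
`γ ∈ A`, is a `ℂ[x₁, …, xₙ]`-submodule exactly when `A` is closed under the steps `e_i`
that stay inside `Γ`.
-/

open scoped BigOperators

noncomputable section

/-- The Laurent polynomial ring `ℂ[x₁^{±1}, …, xₙ^{±1}]`. -/
abbrev LaurRing (n : ℕ) : Type := AddMonoidAlgebra ℂ (Fin n → ℤ)

/-- The polynomial ring `ℂ[x₁, …, xₙ]`. -/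
abbrev PolyRing (n : ℕ) : Type := AddMonoidAlgebra ℂ (Fin n → ℕ)

/-- The inclusion `ℕⁿ →+ ℤⁿ`. -/
def natCoeHom (n : ℕ) : (Fin n → ℕ) →+ (Fin n → ℤ) where
  toFun p := fun j => (p j : ℤ)
  map_zero' := by funext j; simp
  map_add' p q := by funext j; push_cast; rfl

/-- `ℂ[x₁^{±1}, …, xₙ^{±1}]` as an algebra (hence a module) over `ℂ[x₁, …, xₙ]`. -/
instance polyAlgLaur (n : ℕ) : Algebra (PolyRing n) (LaurRing n) :=
  (AddMonoidAlgebra.mapDomainRingHom ℂ (natCoeHom n)).toAlgebra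

/-- `⟨A⟩`: the `ℂ[x₁,…,xₙ]`-submodule of the Laurent polynomial ring generated by the
monomials `x^γ`, `γ ∈ A`. -/
def genMod (n : ℕ) (A : Set (Fin n → ℤ)) : Submodule (PolyRing n) (LaurRing n) :=
  Submodule.span (PolyRing n) ((fun γ => AddMonoidAlgebra.single γ (1 : ℂ)) '' A)

/-- The border bases `B(Γ) = {γ + e_i : γ ∈ Γ, i} ∖ Γ`. -/
def border (n : ℕ) (Γ : Set (Fin n → ℤ)) : Set (Fin n → ℤ) :=
  {m | (∃ γ ∈ Γ, ∃ i : Fin n, m = γ + Pi.single i 1) ∧ m ∉ Γ}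

/-- `C(Γ) := ⟨Γ⟩ / ⟨B(Γ)⟩`, a module over `ℂ[x₁, …, xₙ]`. -/
abbrev CGamma (n : ℕ) (Γ : Set (Fin n → ℤ)) : Type :=
  ↥(genMod n Γ) ⧸ (genMod n (border n Γ)).comap (genMod n Γ).subtype

/-- `C(Γ)` as a `ℂ`-module (restriction of scalars along `ℂ → ℂ[x₁, …, xₙ]`). -/
instance cGammaModC (n : ℕ) (Γ : Set (Fin n → ℤ)) : Module ℂ (CGamma n Γ) :=
  Module.compHom _ (algebraMap ℂ (PolyRing n))

/-- The image in `C(Γ)` of the monomial `x^γ` for `γ ∈ Γ`. -/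
def cls (n : ℕ) (Γ : Set (Fin n → ℤ)) (γ : Fin n → ℤ) (hγ : γ ∈ Γ) : CGamma n Γ :=
  Submodule.Quotient.mk
    ⟨AddMonoidAlgebra.single γ (1 : ℂ), Submodule.subset_span ⟨γ, hγ, rfl⟩⟩

section Lattice

variable {n : ℕ}

theorem natVec_nonneg (p : Fin n → ℕ) : 0 ≤ natVec p := fun j => Int.natCast_nonneg (p j)

theorem natVec_single (i : Fin n) : natVec (Pi.single i 1) = Pi.single i 1 := by
  funext j
  by_cases h : j = i
  · subst h; simp [natVec]
  · simp [natVec, h]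

theorem le_add_natVec (m : Fin n → ℤ) (p : Fin n → ℕ) : m ≤ m + natVec p :=
  le_add_of_nonneg_right (natVec_nonneg p)

theorem le_add_single (m : Fin n → ℤ) (i : Fin n) : m ≤ m + Pi.single i 1 :=
  le_add_of_nonneg_right (Pi.single_nonneg.2 zero_le_one)

theorem exists_eq_add_natVec_of_le {a m : Fin n → ℤ} (h : a ≤ m) :
    ∃ p : Fin n → ℕ, m = a + natVec p :=
  ⟨fun j => (m j - a j).toNat,
    funext fun j => by simp [natVec, Int.toNat_of_nonneg (sub_nonneg.2 (h j))]⟩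

theorem le_induction_single {a : Fin n → ℤ} {P : (Fin n → ℤ) → Prop} (base : P a)
    (step : ∀ m, a ≤ m → P m → ∀ i, P (m + Pi.single i 1)) : ∀ m, a ≤ m → P m := by
  suffices ∀ k : ℕ, ∀ m, a ≤ m → ∑ j, (m j - a j) = k → P m from
    fun m ham => by
      obtain ⟨k, hk⟩ := Int.eq_ofNat_of_zero_le (Finset.sum_nonneg fun j _ => sub_nonneg.2 (ham j))
      exact this k m ham hk
  intro k
  induction k with
  | zero =>
    intro m ham hsum
    have : m = a := funext fun j => by
      have := (Finset.sum_eq_zero_iff_of_nonneg fun j _ => sub_nonneg.2 (ham j)).1 hsum j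
        (Finset.mem_univ j)
      omega
    exact this ▸ base
  | succ k ih =>
    intro m ham hsum
    obtain ⟨i, hi⟩ : ∃ i, a i < m i := by
      by_contra! h
      have : ∑ j, (m j - a j) = 0 := Finset.sum_eq_zero fun j _ => by linarith [h j, ham j]
      omega
    have hle : a ≤ m - Pi.single i 1 := fun j => by
      by_cases hj : j = i
      · subst hj; simp; omega
      · simp [hj, ham j]
    have := step _ hle (ih _ hle ?_) i
    · simpa using this
    · simp only [Pi.sub_apply, sub_right_comm _ _ (a _), Finset.sum_sub_distrib,
        Finset.sum_pi_single', Finset.mem_univ, if_true] at hsum ⊢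
      omega

end Lattice


theorem AddMonoidAlgebra.smul_mem_of_single_smul_mem {k M V : Type*} [CommSemiring k]
    [AddMonoid M] [AddCommMonoid V] [Module k V] [Module (AddMonoidAlgebra k M) V]
    [IsScalarTower k (AddMonoidAlgebra k M) V] (W : Submodule k V)
    (h : ∀ (m : M), ∀ v ∈ W, AddMonoidAlgebra.single m (1 : k) • v ∈ W)
    (f : AddMonoidAlgebra k M) {v : V} (hv : v ∈ W) : f • v ∈ W := by
  induction f using AddMonoidAlgebra.induction_on with
  | of m => exact h m v hv
  | add f g hf hg => rw [add_smul]; exact W.add_mem hf hg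
  | smul c f hf => rw [smul_assoc]; exact W.smul_mem c hf

def AddMonoidAlgebra.submoduleOfSingleSMulMem {k M V : Type*} [CommSemiring k]
    [AddMonoid M] [AddCommMonoid V] [Module k V] [Module (AddMonoidAlgebra k M) V]
    [IsScalarTower k (AddMonoidAlgebra k M) V] (W : Submodule k V)
    (h : ∀ (m : M), ∀ v ∈ W, AddMonoidAlgebra.single m (1 : k) • v ∈ W) :
    Submodule (AddMonoidAlgebra k M) V where
  carrier := W
  zero_mem' := W.zero_mem
  add_mem' := W.add_mem
  smul_mem' f _ hv := smul_mem_of_single_smul_mem W h f hv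

@[simp]
theorem AddMonoidAlgebra.coe_submoduleOfSingleSMulMem {k M V : Type*} [CommSemiring k]
    [AddMonoid M] [AddCommMonoid V] [Module k V] [Module (AddMonoidAlgebra k M) V]
    [IsScalarTower k (AddMonoidAlgebra k M) V] (W : Submodule k V)
    (h : ∀ (m : M), ∀ v ∈ W, AddMonoidAlgebra.single m (1 : k) • v ∈ W) :
    (submoduleOfSingleSMulMem W h : Set V) = W :=
  rfl

section CGamma

variable {n : ℕ} {Γ A : Set (Fin n → ℤ)}

theorem IsPrebrick.ordConnected {s : ℕ} {b : Fin n → ℤ} (h : IsPrebrick n s b Γ) :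
    Γ.OrdConnected := by
  refine ⟨fun x hx y hy z hz => ?_⟩
  obtain ⟨p, rfl⟩ := exists_eq_add_natVec_of_le hz.1
  obtain ⟨q, rfl⟩ := exists_eq_add_natVec_of_le hz.2
  exact h.2.2.1 x hx p q hy

theorem not_le_of_mem_border (hΓ : Γ.OrdConnected) {b m : Fin n → ℤ} (hb : b ∈ border n Γ)
    (hm : m ∈ Γ) : ¬b ≤ m := by
  obtain ⟨⟨γ, hγ, i, rfl⟩, hbΓ⟩ := hb
  exact fun hle => hbΓ (hΓ.out hγ hm ⟨le_add_single γ i, hle⟩)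

theorem mem_or_exists_border_le {a : Fin n → ℤ} (ha : a ∈ Γ) :
    ∀ m, a ≤ m → m ∈ Γ ∨ ∃ b ∈ border n Γ, b ≤ m := by
  refine le_induction_single (Or.inl ha) fun m _ hm i => ?_
  rcases hm with hm | ⟨b, hb, hbm⟩
  · by_cases hmi : m + Pi.single i 1 ∈ Γ
    · exact Or.inl hmi
    · exact Or.inr ⟨_, ⟨⟨m, hm, i, rfl⟩, hmi⟩, le_rfl⟩
  · exact Or.inr ⟨b, hb, hbm.trans (le_add_single m i)⟩

theorem mem_of_le_of_add_single_closed (hΓ : Γ.OrdConnected) (hA : A ⊆ Γ)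
    (hcl : ∀ γ ∈ A, ∀ i : Fin n, γ + Pi.single i 1 ∈ Γ → γ + Pi.single i 1 ∈ A)
    {a : Fin n → ℤ} (ha : a ∈ A) : ∀ m, a ≤ m → m ∈ Γ → m ∈ A := by
  refine le_induction_single (fun _ => ha) fun m ham hm i hmi => hcl m (hm ?_) i hmi
  exact hΓ.out (hA ha) hmi ⟨ham, le_add_single m i⟩

theorem single_smul_single (p : Fin n → ℕ) (γ : Fin n → ℤ) (c d : ℂ) :
    (AddMonoidAlgebra.single p c : PolyRing n) • (AddMonoidAlgebra.single γ d : LaurRing n)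
      = AddMonoidAlgebra.single (γ + natVec p) (c * d) := by
  change AddMonoidAlgebra.mapDomain (natCoeHom n) (AddMonoidAlgebra.single p c) * _ = _
  rw [AddMonoidAlgebra.mapDomain_single, AddMonoidAlgebra.single_mul_single, add_comm]
  rfl

theorem single_mem_genMod {S : Set (Fin n → ℤ)} {s m : Fin n → ℤ} (hs : s ∈ S) (hsm : s ≤ m)
    (c : ℂ) : AddMonoidAlgebra.single m c ∈ genMod n S := by
  obtain ⟨p, rfl⟩ := exists_eq_add_natVec_of_le hsm
  rw [← mul_one c, ← single_smul_single]
  exact Submodule.smul_mem _ _ (Submodule.subset_span ⟨s, hs, rfl⟩)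

theorem exists_le_of_coeff_ne_zero {S : Set (Fin n → ℤ)} {f : LaurRing n} (hf : f ∈ genMod n S)
    {m : Fin n → ℤ} (hm : f.coeff m ≠ 0) : ∃ s ∈ S, s ≤ m := by
  classical
  induction hf using Submodule.span_induction generalizing m with
  | mem x hx =>
    obtain ⟨s, hs, rfl⟩ := hx
    refine ⟨s, hs, le_of_eq ?_⟩
    by_contra h
    exact hm (Finsupp.single_eq_of_ne' h)
  | zero => exact absurd rfl hm
  | add x y _ _ hx hy =>
    by_cases hxm : x.coeff m = 0
    · exact hy fun hym => hm (by simp [hxm, hym])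
    · exact hx hxm
  | smul a x _ hx =>
    obtain ⟨u, hu, v, hv, rfl⟩ := Finset.mem_add.1
      (AddMonoidAlgebra.support_coeff_mul_subset _ _ (Finsupp.mem_support_iff.2 hm))
    obtain ⟨q, -, rfl⟩ := Finset.mem_image.1 (Finsupp.mapDomain_support hu)
    obtain ⟨s, hs, hsv⟩ := hx (Finsupp.mem_support_iff.1 hv)
    exact ⟨s, hs, le_add_of_nonneg_of_le (natVec_nonneg q) hsv⟩

instance (n : ℕ) (Γ : Set (Fin n → ℤ)) : IsScalarTower ℂ (PolyRing n) (CGamma n Γ) :=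
  ⟨fun c f v => by
    change (c • f) • v = algebraMap ℂ (PolyRing n) c • f • v
    rw [Algebra.smul_def, mul_smul]⟩

theorem algebraMap_smul_single (c : ℂ) (γ : Fin n → ℤ) :
    algebraMap ℂ (PolyRing n) c • (AddMonoidAlgebra.single γ 1 : LaurRing n)
      = AddMonoidAlgebra.single γ c := by
  change (AddMonoidAlgebra.single 0 c : PolyRing n) • _ = _
  rw [single_smul_single, mul_one, show natVec (0 : Fin n → ℕ) = 0 from map_zero (natCoeHom n),
    add_zero]

theorem single_smul_cls_of_mem (p : Fin n → ℕ) {γ : Fin n → ℤ} (hγ : γ ∈ Γ)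
    (h : γ + natVec p ∈ Γ) :
    (AddMonoidAlgebra.single p 1 : PolyRing n) • cls n Γ γ hγ = cls n Γ (γ + natVec p) h := by
  rw [cls, ← Submodule.Quotient.mk_smul]
  congr 1
  exact Subtype.ext ((single_smul_single p γ 1 1).trans (by rw [mul_one]))

theorem single_smul_cls_of_notMem (p : Fin n → ℕ) {γ : Fin n → ℤ} (hγ : γ ∈ Γ)
    (h : γ + natVec p ∉ Γ) :
    (AddMonoidAlgebra.single p 1 : PolyRing n) • cls n Γ γ hγ = 0 := by
  rw [cls, ← Submodule.Quotient.mk_smul, Submodule.Quotient.mk_eq_zero, Submodule.mem_comap]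
  obtain ⟨b, hb, hbm⟩ := (mem_or_exists_border_le hγ _ (le_add_natVec γ p)).resolve_left h
  change (AddMonoidAlgebra.single p 1 : PolyRing n) • (AddMonoidAlgebra.single γ 1 : LaurRing n) ∈ _
  rw [single_smul_single]
  exact single_mem_genMod hb hbm _

theorem cls_linearIndependent (hΓ : Γ.OrdConnected) :
    LinearIndependent ℂ (fun γ : Γ => cls n Γ γ γ.2) := by
  classical
  rw [linearIndependent_iff']
  intro s g hsum γ hγs
  let F : genMod n Γ := ∑ δ ∈ s, algebraMap ℂ (PolyRing n) (g δ) •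
    ⟨AddMonoidAlgebra.single δ.1 1, Submodule.subset_span ⟨δ, δ.2, rfl⟩⟩
  have hF : ∑ δ ∈ s, g δ • cls n Γ δ δ.2 = Submodule.Quotient.mk F := by
    change _ = Submodule.mkQ _ F
    rw [map_sum]
    refine Finset.sum_congr rfl fun δ _ => ?_
    rw [map_smul]
    rfl
  have hcoeff : (F : LaurRing n).coeff γ = g γ := by
    simp only [F, Submodule.coe_sum, Submodule.coe_smul, algebraMap_smul_single,
      AddMonoidAlgebra.coeff_sum, AddMonoidAlgebra.coeff_single, Finsupp.finsetSum_apply]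
    rw [Finset.sum_eq_single γ (fun δ _ hδ => ?_) (absurd hγs), Finsupp.single_eq_same]
    exact Finsupp.single_eq_of_ne' (Subtype.coe_injective.ne hδ)
  rw [hF, Submodule.Quotient.mk_eq_zero, Submodule.mem_comap] at hsum
  by_contra hg
  obtain ⟨b, hb, hbγ⟩ := exists_le_of_coeff_ne_zero hsum (m := γ) (hcoeff ▸ hg)
  exact not_le_of_mem_border hΓ hb γ.2 hbγ

theorem cls_mem_span_iff (hΓ : Γ.OrdConnected) (hA : A ⊆ Γ) {γ : Fin n → ℤ} (hγ : γ ∈ Γ) :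
    cls n Γ γ hγ ∈ Submodule.span ℂ (Set.range fun a : A => cls n Γ a.1 (hA a.2)) ↔ γ ∈ A := by
  refine ⟨fun h => ?_, fun h => Submodule.subset_span ⟨⟨γ, h⟩, rfl⟩⟩
  by_contra hγA
  change _ ∈ Submodule.span ℂ (Set.range ((fun δ : Γ => cls n Γ δ δ.2) ∘ Set.inclusion hA)) at h
  rw [Set.range_comp, Set.range_inclusion] at h
  exact (cls_linearIndependent hΓ).notMem_span_image (x := ⟨γ, hγ⟩) hγA h

theorem single_smul_mem_span_cls (hΓ : Γ.OrdConnected) (hA : A ⊆ Γ)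
    (hcl : ∀ γ ∈ A, ∀ i : Fin n, γ + Pi.single i 1 ∈ Γ → γ + Pi.single i 1 ∈ A)
    (p : Fin n → ℕ) {v : CGamma n Γ}
    (hv : v ∈ Submodule.span ℂ (Set.range fun a : A => cls n Γ a.1 (hA a.2))) :
    (AddMonoidAlgebra.single p 1 : PolyRing n) • v ∈
      Submodule.span ℂ (Set.range fun a : A => cls n Γ a.1 (hA a.2)) := by
  induction hv using Submodule.span_induction with
  | mem x hx =>
    obtain ⟨⟨a, ha⟩, rfl⟩ := hx
    by_cases hap : a + natVec p ∈ Γ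
    · rw [single_smul_cls_of_mem p (hA ha) hap, cls_mem_span_iff hΓ hA]
      exact mem_of_le_of_add_single_closed hΓ hA hcl ha _ (le_add_natVec a p) hap
    · rw [single_smul_cls_of_notMem p (hA ha) hap]
      exact Submodule.zero_mem _
  | zero => rw [smul_zero]; exact Submodule.zero_mem _
  | add x y _ _ hx hy => rw [smul_add]; exact Submodule.add_mem _ hx hy
  | smul c x _ hx => rw [smul_comm]; exact Submodule.smul_mem _ c hx

end CGamma

theorem stmt_9_general (n r : ℕ) (α : Fin n → ℤ)
    (Γ : Set (Fin n → ℤ)) (hΓ : IsPrebrick n r α Γ)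
    (A : Set (Fin n → ℤ)) (hA : A ⊆ Γ) :
    (∃ W : Submodule (PolyRing n) (CGamma n Γ),
        LinearIndependent ℂ (fun γ : A => cls n Γ γ.1 (hA γ.2)) ∧
        (W : Set (CGamma n Γ)) =
          (Submodule.span ℂ (Set.range fun γ : A => cls n Γ γ.1 (hA γ.2)) :
            Set (CGamma n Γ)))
    ↔ (∀ γ ∈ A, ∀ i : Fin n, γ + Pi.single i 1 ∈ Γ → γ + Pi.single i 1 ∈ A) := by
  have hΓ := hΓ.ordConnected
  constructor
  · rintro ⟨W, -, hW⟩ γ hγA i hγi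
    have hW_mem {v} : v ∈ W ↔ v ∈ Submodule.span ℂ _ := Set.ext_iff.1 hW v
    have hstep : cls n Γ (γ + natVec (Pi.single i 1)) (natVec_single i ▸ hγi) ∈ W := by
      rw [← single_smul_cls_of_mem _ (hA hγA)]
      exact W.smul_mem _ (hW_mem.2 (Submodule.subset_span ⟨⟨γ, hγA⟩, rfl⟩))
    rw [hW_mem, cls_mem_span_iff hΓ hA, natVec_single] at hstep
    exact hstep
  · intro hcl
    refine ⟨AddMonoidAlgebra.submoduleOfSingleSMulMem _
      fun p _ => single_smul_mem_span_cls hΓ hA hcl p, ?_, ?_⟩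
    · exact (cls_linearIndependent hΓ).comp (Set.inclusion hA) (Set.inclusion_injective hA)
    · exact AddMonoidAlgebra.coe_submoduleOfSingleSMulMem _ _

/-- For a `wt`-prebrick `Γ` and `A ⊆ Γ`, the images in `C(Γ)` of the monomials `x^γ`,
`γ ∈ A`, form a `ℂ`-basis of a `ℂ[x₁,…,xₙ]`-submodule of `C(Γ)` if and only if for all
`γ ∈ A` and all `i`, `γ + e_i ∈ Γ` implies `γ + e_i ∈ A`. -/
theorem stmt_9 (n r : ℕ) (hn : 1 ≤ n) (hr : 1 ≤ r) (α : Fin n → ℤ)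
    (Γ : Set (Fin n → ℤ)) (hΓ : IsPrebrick n r α Γ)
    (A : Set (Fin n → ℤ)) (hA : A ⊆ Γ) :
    (∃ W : Submodule (PolyRing n) (CGamma n Γ),
        LinearIndependent ℂ (fun γ : A => cls n Γ γ.1 (hA γ.2)) ∧
        (W : Set (CGamma n Γ)) =
          (Submodule.span ℂ (Set.range fun γ : A => cls n Γ γ.1 (hA γ.2)) :
            Set (CGamma n Γ)))
    ↔ (∀ γ ∈ A, ∀ i : Fin n, γ + Pi.single i 1 ∈ Γ → γ + Pi.single i 1 ∈ A) :=
  stmt_9_general n r α Γ hΓ A hA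
end
end

section
/- Let a, b, r be positive integers with a < b, gcd(a, b) = 1 and a + b ≤ r (so that the star subdivision at v = (1/r)(1, a, b) is good). Then the ℚ-linear map Φ : Θ_r → Θ_a × Θ_b defined by Φ(θ) = ((j ↦ Σ_{0 ≤ i < r, i ≡ j mod a} θ(i mod r)), (j ↦ Σ_{0 ≤ i < r, i ≡ j mod b} θ(i mod r))) is surjective: for all η_a ∈ Θ_a and η_b ∈ Θ_b there exists θ ∈ Θ_r with Φ(θ) = (η_a, η_b). -/
/-!
For `y < s` the function `δ_{y+t} - δ_y` on `ℤ/r` (note `y + t < r` since `s + t ≤ r`) pushes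
forward to `δ_{y+t} - δ_y` on `ℤ/s` and to `0` on `ℤ/t`. Since `t` generates `ℤ/s`, these
differences telescope to every `δ_z - δ_0`, so they span the sum-zero functions on `ℤ/s`.
Hence `η_a` has a preimage `θ_a` killed by the pushforward to `ℤ/b`, and symmetrically
for `η_b`; then `θ_a + θ_b` works, its total sum being that of `η_a`.
-/

open scoped BigOperators

/-- The pushforward `(φ_k)⋆ : Θ_r → Θ_s`:
`(push r s θ)(j) = ∑_{0 ≤ i < r, i ≡ j mod s} θ(i mod r)`. -/
def push (r s : ℕ) (θ : ZMod r → ℚ) : ZMod s → ℚ :=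
  fun j => ∑ i ∈ (Finset.range r).filter (fun i => ((i : ℕ) : ZMod s) = j), θ (i : ZMod r)

theorem ZMod.zmultiples_natCast_eq_top {s t : ℕ} (hcop : s.Coprime t) :
    AddSubgroup.zmultiples (t : ZMod s) = ⊤ := by
  refine eq_top_iff.mpr fun z _ =>
    AddSubgroup.mem_zmultiples_iff.mpr ⟨ZMod.cast (z * (t : ZMod s)⁻¹), ?_⟩
  rw [zsmul_eq_mul, ZMod.intCast_zmod_cast, mul_assoc,
    mul_comm _ (t : ZMod s), ZMod.coe_mul_inv_eq_one t hcop.symm, mul_one]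

theorem ZMod.sum_range_natCast {M : Type*} [AddCommMonoid M] {s : ℕ} [NeZero s]
    (f : ZMod s → M) : ∑ j ∈ Finset.range s, f j = ∑ x, f x :=
  Finset.sum_nbij' (↑) ZMod.val (fun _ _ => Finset.mem_univ _)
    (fun x _ => Finset.mem_range.mpr x.val_lt)
    (fun _ hj => ZMod.val_cast_of_lt (Finset.mem_range.mp hj))
    (fun x _ => ZMod.natCast_zmod_val x) (fun _ _ => rfl)

section Telescoping

variable {G R : Type*} [AddCommGroup G] [DecidableEq G] [CommRing R]

def translationDifferences (t : G) : Submodule R (G → R) :=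
  Submodule.span R (Set.range fun y : G => Pi.single (y + t) 1 - Pi.single y 1)

theorem single_add_zsmul_sub_single_mem_translationDifferences (t y : G) (n : ℤ) :
    (Pi.single (y + n • t) 1 - Pi.single y 1 : G → R) ∈ translationDifferences t := by
  induction n using Int.induction_on with
  | zero => simp
  | succ n ih =>
    have hstep : (Pi.single (y + (n : ℤ) • t + t) 1 - Pi.single (y + (n : ℤ) • t) 1 :
        G → R) ∈ translationDifferences t := Submodule.subset_span ⟨_, rfl⟩
    rw [add_smul, one_smul, ← add_assoc]
    convert add_mem ih hstep using 1
    abel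
  | pred n ih =>
    have hstep : (Pi.single (y + (-n - 1 : ℤ) • t + t) 1 -
        Pi.single (y + (-n - 1 : ℤ) • t) 1 : G → R) ∈ translationDifferences t := Submodule.subset_span ⟨_, rfl⟩
    have hcancel : y + (-n - 1 : ℤ) • t + t = y + (-n : ℤ) • t := by
      rw [sub_smul, one_smul]; abel
    rw [hcancel] at hstep
    convert sub_mem ih hstep using 1
    abel

theorem mem_translationDifferences_of_sum_eq_zero [Fintype G] {t : G}
    (ht : AddSubgroup.zmultiples t = ⊤) {η : G → R} (hη : ∑ x, η x = 0) :
    η ∈ translationDifferences t := by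
  have hdelta : ∀ z : G,
      (Pi.single z 1 - Pi.single 0 1 : G → R) ∈ translationDifferences t := by
    intro z
    obtain ⟨n, rfl⟩ := AddSubgroup.mem_zmultiples_iff.mp (ht ▸ AddSubgroup.mem_top z)
    simpa using single_add_zsmul_sub_single_mem_translationDifferences (R := R) t 0 n
  have hη' : η = ∑ z, η z • (Pi.single z 1 - Pi.single 0 1 : G → R) := by
    ext x
    simp [Finset.sum_apply, Pi.single_apply, mul_sub, Finset.sum_sub_distrib, hη]
  rw [hη']
  exact Submodule.sum_mem _ fun z _ => Submodule.smul_mem _ _ (hdelta z)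

end Telescoping

section Push

variable {r s t : ℕ}

def pushLinear (r s : ℕ) : (ZMod r → ℚ) →ₗ[ℚ] (ZMod s → ℚ) where
  toFun := push r s
  map_add' θ θ' := by ext j; simp [push, Finset.sum_add_distrib]
  map_smul' c θ := by ext j; simp [push, Finset.mul_sum]

@[simp]
theorem pushLinear_apply (θ : ZMod r → ℚ) : pushLinear r s θ = push r s θ := rfl

theorem push_single {m : ℕ} (hm : m < r) :
    push r s (Pi.single (m : ZMod r) 1) = Pi.single (m : ZMod s) 1 := by
  ext j
  have hinj : ∀ i < r, ((i : ZMod r) = m ↔ i = m) := fun i hi => by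
    rw [ZMod.natCast_eq_natCast_iff', Nat.mod_eq_of_lt hi, Nat.mod_eq_of_lt hm]
  simp only [push, Pi.single_apply]
  rw [Finset.sum_congr rfl fun i hi =>
    if_congr (hinj i (Finset.mem_range.mp (Finset.mem_filter.mp hi).1)) rfl rfl,
    Finset.sum_ite_eq']
  simp [hm, eq_comm]

theorem sum_push [NeZero s] (θ : ZMod r → ℚ) :
    ∑ x, push r s θ x = ∑ i ∈ Finset.range r, θ i :=
  Finset.sum_fiberwise _ _ _

theorem single_add_sub_single_mem_map_ker_push [NeZero s] (hst : s + t ≤ r) (y : ZMod s) :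
    (Pi.single (y + t) 1 - Pi.single y 1 : ZMod s → ℚ) ∈
      (LinearMap.ker (pushLinear r t)).map (pushLinear r s) := by
  have hy := y.val_lt
  refine ⟨Pi.single ((y.val + t : ℕ) : ZMod r) 1 - Pi.single (y.val : ZMod r) 1, ?_, ?_⟩
  · simp only [SetLike.mem_coe, LinearMap.mem_ker, map_sub, pushLinear_apply,
      push_single (show y.val + t < r by omega), push_single (show y.val < r by omega)]
    simp
  · simp only [map_sub, pushLinear_apply,
      push_single (show y.val + t < r by omega), push_single (show y.val < r by omega)]
    simp

theorem exists_push_eq_and_push_eq_zero [NeZero s] (hst : s + t ≤ r) (hcop : s.Coprime t)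
    {η : ZMod s → ℚ} (hη : ∑ x, η x = 0) :
    ∃ θ : ZMod r → ℚ, push r s θ = η ∧ push r t θ = 0 := by
  have hspan : translationDifferences (t : ZMod s) ≤
      (LinearMap.ker (pushLinear r t)).map (pushLinear r s) :=
    Submodule.span_le.mpr <| Set.range_subset_iff.mpr
      (single_add_sub_single_mem_map_ker_push hst)
  obtain ⟨θ, hθ, rfl⟩ :=
    hspan (mem_translationDifferences_of_sum_eq_zero (ZMod.zmultiples_natCast_eq_top hcop) hη)
  exact ⟨θ, rfl, hθ⟩

end Push

/-- For `a < b` coprime with `a + b ≤ r` (so the star subdivision at `(1/r)(1,a,b)` is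
good), the map `Φ = (push r a, push r b) : Θ_r → Θ_a × Θ_b` is surjective, where
`Θ_s = {θ : ℤ/sℤ → ℚ | ∑ θ = 0}`. -/
theorem stmt_10 (r a b : ℕ) (ha : 0 < a) (hab : a < b) (hcop : Nat.gcd a b = 1)
    (habr : a + b ≤ r)
    (ηa : ZMod a → ℚ) (hηa : ∑ j ∈ Finset.range a, ηa (j : ZMod a) = 0)
    (ηb : ZMod b → ℚ) (hηb : ∑ j ∈ Finset.range b, ηb (j : ZMod b) = 0) :
    ∃ θ : ZMod r → ℚ,
      (∑ i ∈ Finset.range r, θ (i : ZMod r) = 0) ∧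
      push r a θ = ηa ∧ push r b θ = ηb := by
  have : NeZero a := ⟨ha.ne'⟩
  have : NeZero b := ⟨(ha.trans hab).ne'⟩
  rw [ZMod.sum_range_natCast] at hηa hηb
  obtain ⟨θa, hθa_a, hθa_b⟩ := exists_push_eq_and_push_eq_zero (r := r) habr hcop hηa
  obtain ⟨θb, hθb_b, hθb_a⟩ :=
    exists_push_eq_and_push_eq_zero (r := r) (by omega) (Nat.Coprime.symm hcop) hηb
  have hpush : ∀ s, push r s (θa + θb) = push r s θa + push r s θb := fun s =>
    map_add (pushLinear r s) θa θb
  refine ⟨θa + θb, ?_, ?_, ?_⟩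
  · rw [← sum_push (s := a), hpush, hθa_a, hθb_a, add_zero, hηa]
  · rw [hpush, hθa_a, hθb_a, add_zero]
  · rw [hpush, hθa_b, hθb_b, zero_add]
end

section
/- For every integer j, Σ_{0 ≤ i ≤ r−1, i ≡ j mod a} ϑ(i) = 0 and Σ_{0 ≤ i ≤ r−1, i ≡ j mod b} ϑ(i) = 0. (These are the vanishing conditions [(φ_k)_⋆(ϑ)](χ) ≡ 0 for k = 2, 3 of the key properties of ϑ.) -/
open scoped BigOperators

/-- The stability parameter `ϑ` of Section 4.3 for the group of type `(1/r)(1,a,b)`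
with `r = abc + a + b + 1`:
`ϑ(i) = -[0 ≤ i < b] - [i = a + b] + [r - b - 1 ≤ i ≤ r - 1]`. -/
def vth1 (a b r : ℕ) (i : ℕ) : ℤ :=
  (if i < b then -1 else 0) + (if i = a + b then -1 else 0) +
    (if (r : ℤ) - b - 1 ≤ (i : ℤ) ∧ (i : ℤ) ≤ (r : ℤ) - 1 then 1 else 0)

/-!
On `range r`, `ϑ` is the indicator of the window `[r - b - 1, r)` minus the indicators of
`[0, b)` and of `{a + b}`. Writing `n = abc + a`, the window is `[n, n + b) ∪ {n + b}`, and
`n + b ≡ a + b` modulo both `a` and `b`. So it remains to see that `[n, n + b)` and `[0, b)` meet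
each residue class equally often: modulo `a` because `n` is a multiple of `a`, so one interval is a
translate of the other; modulo `b` because both are intervals of length `b`.
-/

open Finset Function

lemma card_filter_Ico_add_of_periodic {p : ℕ → Prop} [DecidablePred p] {t : ℕ}
    (hp : Periodic p t) (m l : ℕ) :
    #{i ∈ Ico (m + t) (l + t) | p i} = #{i ∈ Ico m l | p i} := by
  rw [← map_add_right_Ico, filter_map, card_map]
  congr 1
  exact filter_congr fun i _ => by simp [hp i]

lemma periodic_intCast_emod_eq (m : ℕ) (j : ℤ) :
    Periodic (fun i : ℕ => (i : ℤ) % m = j % m) m :=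
  fun _ => by simp

lemma sum_filter_vth1 (a b n r : ℕ) (hn : a ≤ n) (hr : r = n + b + 1)
    (p : ℕ → Prop) [DecidablePred p] :
    ∑ i ∈ (range r).filter p, vth1 a b r i
      = #{i ∈ Ico n (n + b) | p i} + (if p (n + b) then 1 else 0)
        - #{i ∈ range b | p i} - (if p (a + b) then 1 else 0) := by
  have hlow : {i ∈ range r | p i ∧ i < b} = {i ∈ range b | p i} := by
    ext i; simp only [mem_filter, mem_range]; grind
  have hpeak : {i ∈ range r | p i ∧ i = a + b} = if p (a + b) then {a + b} else ∅ := by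
    ext i; split_ifs <;> simp only [mem_filter, mem_range, mem_singleton] <;> grind
  have hwindow : {i ∈ range r | p i ∧ (r : ℤ) - b - 1 ≤ i ∧ (i : ℤ) ≤ r - 1}
      = {i ∈ insert (n + b) (Ico n (n + b)) | p i} := by
    ext i; simp only [mem_filter, mem_range, mem_insert, mem_Ico]; grind
  simp only [vth1, sum_add_distrib, ← sum_filter, sum_const, filter_filter, hlow, hpeak,
    hwindow, filter_insert]
  split_ifs <;> simp [card_insert_of_notMem] <;> ring

lemma sum_filter_vth1_eq_zero (a b n r : ℕ) (hn : a ≤ n) (hr : r = n + b + 1)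
    (p : ℕ → Prop) [DecidablePred p]
    (hcard : #{i ∈ Ico n (n + b) | p i} = #{i ∈ range b | p i}) (hpeak : p (n + b) ↔ p (a + b)) :
    ∑ i ∈ (range r).filter p, vth1 a b r i = 0 := by
  simp [sum_filter_vth1 a b n r hn hr, hcard, hpeak]

theorem stmt_12_general (a b c : ℕ)
    (r : ℕ) (hr : r = a * b * c + a + b + 1) (j : ℤ) :
    (∑ i ∈ (Finset.range r).filter (fun i : ℕ => (i : ℤ) % (a : ℤ) = j % (a : ℤ)),
        vth1 a b r i) = 0 ∧
    (∑ i ∈ (Finset.range r).filter (fun i : ℕ => (i : ℤ) % (b : ℤ) = j % (b : ℤ)),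
        vth1 a b r i) = 0 := by
  have hpa := periodic_intCast_emod_eq a j
  have hpb := periodic_intCast_emod_eq b j
  refine ⟨sum_filter_vth1_eq_zero a b (a * b * c + a) r (by omega) hr _ ?_ ?_,
    sum_filter_vth1_eq_zero a b (a * b * c + a) r (by omega) hr _ ?_ ?_⟩
  · rw [range_eq_Ico]
    convert card_filter_Ico_add_of_periodic (hpa.nat_mul (b * c + 1)) 0 b using 4 <;>
      push_cast <;> ring
  · convert Iff.of_eq (hpa.nat_mul (b * c) (a + b)) using 4
    push_cast; ring
  · rw [Nat.filter_Ico_card_eq_of_periodic _ _ _ hpb, Nat.count_eq_card_filter_range]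
  · convert Iff.of_eq (hpb.nat_mul (a * c) (a + b)) using 4
    push_cast; ring

/-- For every integer `j`, `∑_{0 ≤ i ≤ r-1, i ≡ j mod a} ϑ(i) = 0` and
`∑_{0 ≤ i ≤ r-1, i ≡ j mod b} ϑ(i) = 0`. -/
theorem stmt_12 (a b c : ℕ) (ha : 0 < a) (hb : 0 < b) (hc : 0 < c) (hab : a < b)
    (r : ℕ) (hr : r = a * b * c + a + b + 1) (j : ℤ) :
    (∑ i ∈ (Finset.range r).filter (fun i : ℕ => (i : ℤ) % (a : ℤ) = j % (a : ℤ)),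
        vth1 a b r i) = 0 ∧
    (∑ i ∈ (Finset.range r).filter (fun i : ℕ => (i : ℤ) % (b : ℤ) = j % (b : ℤ)),
        vth1 a b r i) = 0 :=
  stmt_12_general a b c r hr j
end

section
/- For every integer j, Σ_{0 ≤ i ≤ r−1, i ≡ j mod a} ϑ(i) = 0 and Σ_{0 ≤ i ≤ r−1, i ≡ j mod b} ϑ(i) = 0. (These are the vanishing conditions [(φ_k)_⋆(ϑ)](χ) ≡ 0 for k = 2, 3 of the key properties, which the case (a) parameter of Section 4.4 is asserted to satisfy.) -/
open scoped BigOperators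

/-- The case (a) stability parameter `ϑ` of Section 4.4 for the group of type
`(1/r)(1,a,b)` with `b = ak + 1` and `r = abc + a - 2b + 1`:
`ϑ(i) = -[0 ≤ i < b] - [i = 2ab - 5b + 3] + [i = r - a - b + 2] + [r - b ≤ i ≤ r - 1]`. -/
def vth2 (a b r : ℕ) (i : ℕ) : ℤ :=
  (if i < b then -1 else 0) +
    (if (i : ℤ) = 2 * a * b - 5 * b + 3 then -1 else 0) +
    (if (i : ℤ) = (r : ℤ) - a - b + 2 then 1 else 0) +
    (if (r : ℤ) - b ≤ (i : ℤ) ∧ (i : ℤ) ≤ (r : ℤ) - 1 then 1 else 0)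

/-! Write `ϑ = 1_[r-b, r) - 1_[0, b) + δ_{P₂} - δ_{P₁}` with `P₁ = 2ab - 5b + 3` and
`P₂ = r - a - b + 2`. An interval `[s, s + mk + 1)` meets every residue class mod `m` in `k`
points, plus the point `s` for the class of `s`. Modulo `a` both intervals have length `ak + 1`,
and `P₁ ≡ r - b`, `P₂ ≡ 0`, so the two extra points cancel the two deltas. Modulo `b` both
intervals have length `b`, so they cancel each other, and `P₁ ≡ P₂ ≡ 3`. -/

open Finset

theorem card_filter_Ico_modEq_mul (s m k : ℕ) (hm : 0 < m) (j : ℤ) :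
    (#{i ∈ Ico s (s + m * k) | ((i : ℕ) : ℤ) ≡ j [ZMOD m]} : ℤ) = k := by
  have hmap : {i ∈ Ico s (s + m * k) | ((i : ℕ) : ℤ) ≡ j [ZMOD m]}.map Nat.castEmbedding =
      {x ∈ Ico (s : ℤ) (s + m * k) | x ≡ j [ZMOD m]} := by
    ext x
    simp only [mem_map, mem_filter, mem_Ico, Nat.castEmbedding_apply]
    constructor
    · rintro ⟨i, ⟨⟨h1, h2⟩, h3⟩, rfl⟩
      exact ⟨⟨by omega, by omega⟩, h3⟩
    · rintro ⟨⟨h1, h2⟩, h3⟩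
      lift x to ℕ using by omega
      exact ⟨x, ⟨⟨by omega, by omega⟩, h3⟩, rfl⟩
  rw [← card_map, hmap, Int.Ico_filter_modEq_card _ _ (by exact_mod_cast hm)]
  push_cast
  rw [show ((s : ℚ) + m * k - j) / m = (s - j) / m + k by field_simp; ring, Int.ceil_add_natCast]
  simp

theorem card_filter_Ico_modEq_mul_add_one (s m k : ℕ) (hm : 0 < m) (j : ℤ) :
    (#{i ∈ Ico s (s + m * k + 1) | ((i : ℕ) : ℤ) ≡ j [ZMOD m]} : ℤ) =
      k + if (s : ℤ) ≡ j [ZMOD m] then 1 else 0 := by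
  have hs : ((s + m * k : ℕ) : ℤ) ≡ s [ZMOD m] :=
    Int.modEq_iff_dvd.mpr ⟨-k, by push_cast; ring⟩
  rw [Nat.Ico_succ_right_eq_insert_Ico (by omega), filter_insert,
    ← card_filter_Ico_modEq_mul s m k hm j]
  by_cases h : (s : ℤ) ≡ j [ZMOD m]
  · rw [if_pos (hs.trans h), card_insert_of_notMem (by simp), if_pos h]
    push_cast; ring
  · rw [if_neg fun h' => h (hs.symm.trans h'), if_neg h, add_zero]

theorem vth2_eq_ite (a b r P₁ P₂ i : ℕ) (hbr : b ≤ r)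
    (hP₁ : (P₁ : ℤ) = 2 * a * b - 5 * b + 3) (hP₂ : (P₂ : ℤ) = r - a - b + 2) :
    vth2 a b r i = (if i ∈ Ico (r - b) r then 1 else 0) - (if i ∈ range b then 1 else 0) +
      (if i = P₂ then 1 else 0) - (if i = P₁ then 1 else 0) := by
  simp only [vth2, mem_Ico, mem_range, ← hP₁, ← hP₂, Nat.cast_inj]
  split_ifs <;> omega

theorem sum_filter_boole_mem {s t : Finset ℕ} (p : ℕ → Prop) [DecidablePred p] (h : t ⊆ s) :
    ∑ i ∈ s with p i, (if i ∈ t then (1 : ℤ) else 0) = #{i ∈ t | p i} := by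
  rw [sum_boole, filter_filter]
  congr 2
  ext i
  have := @h i
  simp only [mem_filter]
  tauto

theorem sum_filter_ite_eq {s : Finset ℕ} (p : ℕ → Prop) [DecidablePred p] {P : ℕ} (h : P ∈ s) :
    ∑ i ∈ s with p i, (if i = P then (1 : ℤ) else 0) = if p P then 1 else 0 := by
  simp [sum_ite_eq', h]

theorem sum_filter_vth2 (a b r P₁ P₂ : ℕ) (p : ℕ → Prop) [DecidablePred p] (hbr : b ≤ r)
    (hP₁ : (P₁ : ℤ) = 2 * a * b - 5 * b + 3) (hP₂ : (P₂ : ℤ) = r - a - b + 2)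
    (hP₁r : P₁ < r) (hP₂r : P₂ < r) :
    ∑ i ∈ range r with p i, vth2 a b r i =
      (#{i ∈ Ico (r - b) r | p i} : ℤ) - #{i ∈ range b | p i} +
        (if p P₂ then 1 else 0) - (if p P₁ then 1 else 0) := by
  rw [sum_congr rfl fun i _ => vth2_eq_ite a b r P₁ P₂ i hbr hP₁ hP₂]
  simp only [sum_add_distrib, sum_sub_distrib]
  have hIco : Ico (r - b) r ⊆ range r := fun i hi => by
    simp only [mem_Ico, mem_range] at hi ⊢; omega
  rw [sum_filter_boole_mem p hIco, sum_filter_boole_mem p (range_subset_range.mpr hbr),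
    sum_filter_ite_eq p (mem_range.mpr hP₂r), sum_filter_ite_eq p (mem_range.mpr hP₁r)]

theorem sum_filter_modEq_vth2_eq_zero_of_eq_mul_add_one (a b r P₁ P₂ m k : ℕ) (hm : 0 < m)
    (hb : b = m * k + 1) (hbr : b ≤ r)
    (hP₁ : (P₁ : ℤ) = 2 * a * b - 5 * b + 3) (hP₂ : (P₂ : ℤ) = r - a - b + 2)
    (hP₁r : P₁ < r) (hP₂r : P₂ < r)
    (h₁ : (P₁ : ℤ) ≡ (r - b : ℕ) [ZMOD m]) (h₂ : (P₂ : ℤ) ≡ 0 [ZMOD m]) (j : ℤ) :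
    ∑ i ∈ range r with ((i : ℕ) : ℤ) ≡ j [ZMOD m], vth2 a b r i = 0 := by
  have hIco : Ico (r - b) r = Ico (r - b) (r - b + m * k + 1) := by congr 1; omega
  have hrange : range b = Ico 0 (0 + m * k + 1) := by rw [range_eq_Ico]; congr 1; omega
  rw [sum_filter_vth2 a b r P₁ P₂ _ hbr hP₁ hP₂ hP₁r hP₂r, hIco, hrange,
    card_filter_Ico_modEq_mul_add_one _ _ _ hm, card_filter_Ico_modEq_mul_add_one _ _ _ hm]
  simp only [Nat.cast_zero, (⟨h₁.symm.trans, h₁.trans⟩ : _ ↔ ((r - b : ℕ) : ℤ) ≡ j [ZMOD m]),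
    (⟨h₂.symm.trans, h₂.trans⟩ : _ ↔ (0 : ℤ) ≡ j [ZMOD m])]
  ring

theorem sum_filter_modEq_self_vth2_eq_zero (a b r P₁ P₂ : ℕ) (hb : 0 < b) (hbr : b ≤ r)
    (hP₁ : (P₁ : ℤ) = 2 * a * b - 5 * b + 3) (hP₂ : (P₂ : ℤ) = r - a - b + 2)
    (hP₁r : P₁ < r) (hP₂r : P₂ < r) (h : (P₁ : ℤ) ≡ P₂ [ZMOD b]) (j : ℤ) :
    ∑ i ∈ range r with ((i : ℕ) : ℤ) ≡ j [ZMOD b], vth2 a b r i = 0 := by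
  have hIco : Ico (r - b) r = Ico (r - b) (r - b + b * 1) := by congr 1; omega
  have hrange : range b = Ico 0 (0 + b * 1) := by rw [range_eq_Ico]; congr 1; omega
  rw [sum_filter_vth2 a b r P₁ P₂ _ hbr hP₁ hP₂ hP₁r hP₂r, hIco, hrange,
    card_filter_Ico_modEq_mul _ _ _ hb, card_filter_Ico_modEq_mul _ _ _ hb]
  simp only [(⟨h.symm.trans, h.trans⟩ : _ ↔ (P₂ : ℤ) ≡ j [ZMOD b])]
  ring

theorem stmt_14_general (a k c : ℕ) (ha : 4 ≤ a) (hc : 2 ≤ c)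
    (b : ℕ) (hb : b = a * k + 1)
    (r : ℕ) (hr : (r : ℤ) = (a : ℤ) * b * c + a - 2 * b + 1) (j : ℤ) :
    (∑ i ∈ (Finset.range r).filter (fun i : ℕ => (i : ℤ) % (a : ℤ) = j % (a : ℤ)),
        vth2 a b r i) = 0 ∧
    (∑ i ∈ (Finset.range r).filter (fun i : ℕ => (i : ℤ) % (b : ℤ) = j % (b : ℤ)),
        vth2 a b r i) = 0 := by
  have hbZ : (b : ℤ) = a * k + 1 := by exact_mod_cast hb
  have hab : (b : ℤ) * 8 ≤ b * (a * c) :=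
    mul_le_mul_of_nonneg_left (by norm_cast; nlinarith) (by positivity)
  have hbr : b ≤ r := by zify; linarith
  obtain ⟨P₁, hP₁⟩ : ∃ P : ℕ, (P : ℤ) = 2 * a * b - 5 * b + 3 :=
    ⟨_, Int.toNat_of_nonneg (by nlinarith)⟩
  obtain ⟨P₂, hP₂⟩ : ∃ P : ℕ, (P : ℤ) = r - a - b + 2 := ⟨_, Int.toNat_of_nonneg (by linarith)⟩
  have hP₁r : P₁ < r := by
    have : (0 : ℤ) ≤ a * b * (c - 2) := mul_nonneg (by positivity) (by omega)
    zify; linarith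
  have hP₂r : P₂ < r := by omega
  have h₁ : (P₁ : ℤ) ≡ (r - b : ℕ) [ZMOD a] :=
    Int.modEq_iff_dvd.mpr ⟨b * c + 1 + 2 * k - 2 * b, by
      push_cast [Nat.cast_sub hbr]; linear_combination hr - hP₁ + 2 * hbZ⟩
  have h₂ : (P₂ : ℤ) ≡ 0 [ZMOD a] :=
    Int.modEq_iff_dvd.mpr ⟨3 * k - b * c, by linear_combination -hP₂ - hr + 3 * hbZ⟩
  have h₃ : (P₁ : ℤ) ≡ P₂ [ZMOD b] :=
    Int.modEq_iff_dvd.mpr ⟨a * c + 2 - 2 * a, by linear_combination hP₂ - hP₁ + hr⟩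
  exact ⟨sum_filter_modEq_vth2_eq_zero_of_eq_mul_add_one a b r P₁ P₂ a k (by omega) hb hbr
      hP₁ hP₂ hP₁r hP₂r h₁ h₂ j,
    sum_filter_modEq_self_vth2_eq_zero a b r P₁ P₂ (by omega) hbr hP₁ hP₂ hP₁r hP₂r h₃ j⟩

/-- For every integer `j`, `∑_{0 ≤ i ≤ r-1, i ≡ j mod a} ϑ(i) = 0` and
`∑_{0 ≤ i ≤ r-1, i ≡ j mod b} ϑ(i) = 0`. -/
theorem stmt_14 (a k c : ℕ) (ha : 4 ≤ a) (hk : 1 ≤ k) (hc : 2 ≤ c)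
    (b : ℕ) (hb : b = a * k + 1)
    (r : ℕ) (hr : (r : ℤ) = (a : ℤ) * b * c + a - 2 * b + 1) (j : ℤ) :
    (∑ i ∈ (Finset.range r).filter (fun i : ℕ => (i : ℤ) % (a : ℤ) = j % (a : ℤ)),
        vth2 a b r i) = 0 ∧
    (∑ i ∈ (Finset.range r).filter (fun i : ℕ => (i : ℤ) % (b : ℤ) = j % (b : ℤ)),
        vth2 a b r i) = 0 :=
  stmt_14_general a k c ha hc b hb r hr j
end

section
/- Assume n ≥ 2, gcd(a_1, …, a_n, r) = 1, and that the star subdivision at v = (1/r)(a_1, …, a_n) is good. Let Γ′ ⊆ ℤ^n be a G_k-brick and set Γ := φ_k^{−1}(Γ′). Call a subset A of a w-prebrick Δ closed in Δ if for every γ ∈ A and every i ∈ {1, …, n}, γ + e_i ∈ Δ implies γ + e_i ∈ A. If A ⊆ Γ is closed in Γ and satisfies A = Γ ∩ φ_k^{−1}(φ_k(A)), then φ_k(A) ⊆ Γ′ is closed in Γ′. -/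
open scoped BigOperators

/-- A subset `A` of a prebrick `Δ` is closed in `Δ` if `γ ∈ A`, `γ + e_i ∈ Δ` imply
`γ + e_i ∈ A`. -/
def ClosedIn (n : ℕ) (Δ A : Set (Fin n → ℤ)) : Prop :=
  ∀ γ ∈ A, ∀ i : Fin n, γ + Pi.single i 1 ∈ Δ → γ + Pi.single i 1 ∈ A


private lemma ediv_eq_of' {x b q : ℤ} (hb : 0 < b) (h1 : b * q ≤ x) (h2 : x < b * (q + 1)) :
    x / b = q := by
  have hq : q ≤ x / b := (Int.le_ediv_iff_mul_le hb).mpr (by linarith [mul_comm q b])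
  have hq' : x / b < q + 1 := (Int.ediv_lt_iff_lt_mul hb).mpr (by linarith [mul_comm (q + 1) b])
  omega

private lemma sum_mul_update {n : ℕ} (a : Fin n → ℕ) (k : Fin n) (γ : Fin n → ℤ) (c : ℤ) :
    ∑ j, (a j : ℤ) * Function.update γ k c j
      = (∑ j, (a j : ℤ) * γ j) - a k * γ k + a k * c := by
  have h : (fun j => (a j : ℤ) * Function.update γ k c j)
      = Function.update (fun j => (a j : ℤ) * γ j) k ((a k : ℤ) * c) := by
    funext j
    rcases eq_or_ne j k with rfl | hj
    · simp
    · simp [Function.update_of_ne hj]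
  rw [h, Finset.sum_update_of_mem (Finset.mem_univ k)]
  rw [Finset.sum_sdiff_eq_sub (Finset.singleton_subset_iff.mpr (Finset.mem_univ k))]
  simp; ring

private lemma sum_mul_single {n : ℕ} (a : Fin n → ℕ) (i : Fin n) :
    ∑ j, (a j : ℤ) * (Pi.single i 1 : Fin n → ℤ) j = a i := by
  simp [Pi.single_apply]

private lemma rd_eq {n r : ℕ} (hr : 0 < r) (a : Fin n → ℕ) (k : Fin n) (m γ : Fin n → ℤ)
    (hoff : ∀ j, j ≠ k → m j = γ j)
    (h1 : (r : ℤ) * γ k ≤ ∑ j, (a j : ℤ) * m j)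
    (h2 : (∑ j, (a j : ℤ) * m j) < (r : ℤ) * (γ k + 1)) :
    roundDown n r a k m = γ := by
  funext j
  unfold roundDown
  rw [Function.update_apply]
  split_ifs with h
  · subst h
    rw [Int.fdiv_eq_ediv_of_nonneg _ (by positivity)]
    exact ediv_eq_of' (by exact_mod_cast hr) h1 h2
  · exact hoff j h

/-- Let `Γ = φ_k⁻¹(Γ')` be the natural inverse of a `G_k`-brick `Γ'`. If `A ⊆ Γ` is
closed in `Γ` and saturated, i.e. `A = Γ ∩ φ_k⁻¹(φ_k(A))`, then `φ_k(A) ⊆ Γ'` is closed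
in `Γ'`. -/
theorem stmt_16 (n : ℕ) (hn : 2 ≤ n) (r : ℕ) (hr : 1 ≤ r) (a : Fin n → ℕ)
    (ha : ∀ j, 0 < a j) (k : Fin n)
    (hgcd : Nat.gcd (Finset.univ.gcd a) r = 1)
    (hgood : ∀ i j : Fin n, i ≠ j → a i + a j ≤ r)
    (Γ' : Set (Fin n → ℤ))
    (hΓ' : IsBrick n (a k) (fun j => if j = k then -(r : ℤ) else (a j : ℤ)) Γ')
    (A : Set (Fin n → ℤ))
    (hA : A ⊆ {m | roundDown n r a k m ∈ Γ'})
    (hclosed : ClosedIn n {m | roundDown n r a k m ∈ Γ'} A)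
    (hsat : A = {m | roundDown n r a k m ∈ Γ'} ∩ (roundDown n r a k) ⁻¹' (roundDown n r a k '' A)) :
    roundDown n r a k '' A ⊆ Γ' ∧ ClosedIn n Γ' (roundDown n r a k '' A) := by
  have hr' : (0 : ℤ) < r := by exact_mod_cast hr
  obtain ⟨j0, hj0⟩ : ∃ j : Fin n, j ≠ k := by
    have h0 : (0 : ℕ) < n := by omega
    have h1 : (1 : ℕ) < n := by omega
    by_cases h : (⟨0, h0⟩ : Fin n) = k
    · exact ⟨⟨1, h1⟩, by simp [← h, Fin.ext_iff]⟩
    · exact ⟨⟨0, h0⟩, h⟩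
  have hakr : (a k : ℤ) < r := by
    have h3 := hgood k j0 (fun e => hj0 e.symm)
    have h4 := ha j0
    exact_mod_cast by omega
  have hak : (0 : ℤ) < a k := by exact_mod_cast ha k
  constructor
  · rintro x ⟨m, hm, rfl⟩; exact hA hm
  · intro γ' hγ' i hmem
    obtain ⟨m₀, hm₀, hrd⟩ := hγ'
    have hγΓ : γ' ∈ Γ' := hrd ▸ hA hm₀
    set T : ℤ := (∑ j, (a j : ℤ) * γ' j) - a k * γ' k with hT
    have key : ∀ c : ℤ,
        (r : ℤ) * γ' k ≤ T + a k * c → T + a k * c < r * (γ' k + 1) →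
        (r : ℤ) * ((γ' + (Pi.single i 1 : Fin n → ℤ)) k) ≤ T + a k * c + a i →
        T + a k * c + a i < r * ((γ' + (Pi.single i 1 : Fin n → ℤ)) k + 1) →
        γ' + (Pi.single i 1 : Fin n → ℤ) ∈ roundDown n r a k '' A := by
      intro c hB1 hB2 hB3 hB4
      set m : Fin n → ℤ := Function.update γ' k c with hm
      have hsum : ∑ j, (a j : ℤ) * m j = T + a k * c := by
        rw [hm, sum_mul_update]
      have hrdm : roundDown n r a k m = γ' :=
        rd_eq (by omega) a k m γ' (fun j hj => Function.update_of_ne hj _ _)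
          (by rw [hsum]; exact hB1) (by rw [hsum]; exact hB2)
      have hmA : m ∈ A := by
        rw [hsat]
        refine ⟨?_, ?_⟩
        · show roundDown n r a k m ∈ Γ'
          rw [hrdm]; exact hγΓ
        · show roundDown n r a k m ∈ roundDown n r a k '' A
          rw [hrdm]; exact ⟨m₀, hm₀, hrd⟩
      have hsum2 : ∑ j, (a j : ℤ) * (m + (Pi.single i 1 : Fin n → ℤ)) j = T + a k * c + a i := by
        have : ∑ j, (a j : ℤ) * (m + (Pi.single i 1 : Fin n → ℤ)) j
            = (∑ j, (a j : ℤ) * m j) + ∑ j, (a j : ℤ) * (Pi.single i 1 : Fin n → ℤ) j := by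
          rw [← Finset.sum_add_distrib]
          exact Finset.sum_congr rfl (fun j _ => by simp [mul_add])
        rw [this, hsum, sum_mul_single]
      have hrdm2 : roundDown n r a k (m + Pi.single i 1) = γ' + Pi.single i 1 :=
        rd_eq (by omega) a k _ _
          (fun j hj => by simp only [Pi.add_apply]; rw [hm, Function.update_of_ne hj])
          (by rw [hsum2]; exact hB3) (by rw [hsum2]; exact hB4)
      have hstep : m + Pi.single i 1 ∈ A := by
        refine hclosed m hmA i ?_
        show roundDown n r a k (m + Pi.single i 1) ∈ Γ'
        rw [hrdm2]; exact hmem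
      exact ⟨m + Pi.single i 1, hstep, hrdm2⟩
    rcases eq_or_ne i k with rfl | hik
    · -- i = k : take the representative with maximal weighted sum
      set c : ℤ := ((r : ℤ) * γ' i + r - 1 - T) / a i with hc
      have hd := Int.mul_ediv_add_emod ((r : ℤ) * γ' i + r - 1 - T) (a i)
      have h0 := Int.emod_nonneg ((r : ℤ) * γ' i + r - 1 - T) (ne_of_gt hak)
      have hlt := Int.emod_lt_of_pos ((r : ℤ) * γ' i + r - 1 - T) hak
      have hsk : (γ' + (Pi.single i 1 : Fin n → ℤ)) i = γ' i + 1 := by simp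
      rw [← hc] at hd
      refine key c ?_ ?_ ?_ ?_
      · linarith
      · linarith
      · rw [hsk]; linarith
      · rw [hsk]; linarith
    · -- i ≠ k : take the representative with minimal weighted sum
      set c : ℤ := -((T - (r : ℤ) * γ' k) / a k) with hc
      have hd := Int.mul_ediv_add_emod (T - (r : ℤ) * γ' k) (a k)
      have h0 := Int.emod_nonneg (T - (r : ℤ) * γ' k) (ne_of_gt hak)
      have hlt := Int.emod_lt_of_pos (T - (r : ℤ) * γ' k) hak
      have hgd : (a i : ℤ) + a k ≤ r := by exact_mod_cast hgood i k hik
      have hai : (0 : ℤ) ≤ a i := by positivity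
      have hsk : (γ' + (Pi.single i 1 : Fin n → ℤ)) k = γ' k := by
        have h5 : (Pi.single i (1 : ℤ) : Fin n → ℤ) k = 0 :=
          Pi.single_eq_of_ne (fun e => hik e.symm) 1
        simp [h5]
      have hd2 : (a k : ℤ) * c = r * γ' k - T + (T - (r : ℤ) * γ' k) % a k := by
        rw [hc, mul_neg]; linarith
      refine key c ?_ ?_ ?_ ?_
      · linarith
      · linarith
      · rw [hsk]; linarith
      · rw [hsk]; linarith
end

section
/- Let r ≥ 2 and 1 ≤ a, b ≤ r − 1, and let G be the cyclic group of type (1/r)(1, a, b), i.e. n = 3 with weight map wt(m) = m_1 + a·m_2 + b·m_3 mod r on ℤ^3. Then Γ := {l·e_1 : 0 ≤ l ≤ r − 1} (the set of exponent vectors of 1, x_1, x_1^2, …, x_1^{r−1}) is a G-brick, and S(Γ) = {u ∈ ℤ^3 : u_2 ≥ 0, u_3 ≥ 0, u_1 + a·u_2 + b·u_3 ≥ 0, and r divides u_1 + a·u_2 + b·u_3}; the latter set equals σ_1^∨ ∩ M for the cone σ_1 = Cone(v, e_2, e_3) of the star subdivision of the positive octant at v = (1/r)(1, a, b). -/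
/-!
Every generator `p + γ - w_Γ(p + γ)` of `S(Γ)` has nonnegative `e₂`, `e₃`-coordinates, and its
weight sum `u₁ + a u₂ + b u₃` is a multiple of `r` that exceeds `-r` (the subtracted
`w_Γ(p + γ) ∈ Γ` has weight sum below `r`), hence is nonnegative. Conversely every such lattice point is a nonnegative combination
of `r e₁`, `e₂ - a e₁` and `e₃ - b e₁`, and these are generators `p - w_Γ(p)` because `a, b < r`.
The resulting monoid is visibly pointed, and it is `σ₁^∨ ∩ M` because
`⟨s v + t e₂ + w e₃, u⟩ = (s / r) (u₁ + a u₂ + b u₃) + t u₂ + w u₃`.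
-/

open scoped BigOperators

/-- `Γ := {0, e₁, 2e₁, …, (r-1)e₁}`, the exponent set of `1, x₁, …, x₁^{r-1}`. -/
def powersOfX1 (r : ℕ) : Set (Fin 3 → ℤ) :=
  {m | ∃ l : ℕ, l ≤ r - 1 ∧ m = (l : ℤ) • Pi.single (0 : Fin 3) (1 : ℤ)}

theorem Int.nonneg_of_dvd_of_neg_lt {r x : ℤ} (hx : r ∣ x) (h : -r < x) : 0 ≤ x := by
  obtain ⟨k, rfl⟩ := hx
  rcases le_or_gt r 0 with hr | hr
  · linarith
  · have : -1 < k := lt_of_mul_lt_mul_left (by linarith) hr.le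
    exact mul_nonneg hr.le (by omega)

section CyclicQuotient

variable {r : ℕ} (a b : ℕ)

theorem sum_weight_mul (m : Fin 3 → ℤ) :
    ∑ j, ![1, (a : ℤ), (b : ℤ)] j * m j = m 0 + a * m 1 + b * m 2 := by
  simp [Fin.sum_univ_three]

theorem wmap_eq_wmap_iff (m m' : Fin 3 → ℤ) :
    wmap 3 r ![1, (a : ℤ), (b : ℤ)] m = wmap 3 r ![1, (a : ℤ), (b : ℤ)] m' ↔
      (r : ℤ) ∣ (m' 0 + a * m' 1 + b * m' 2) - (m 0 + a * m 1 + b * m 2) := by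
  rw [wmap, wmap, sum_weight_mul, sum_weight_mul, ZMod.intCast_eq_intCast_iff_dvd_sub]

variable (r) in
def dualConeLattice : AddSubmonoid (Fin 3 → ℤ) where
  carrier := {u | 0 ≤ u 1 ∧ 0 ≤ u 2 ∧ 0 ≤ u 0 + (a : ℤ) * u 1 + (b : ℤ) * u 2 ∧
    (r : ℤ) ∣ u 0 + (a : ℤ) * u 1 + (b : ℤ) * u 2}
  zero_mem' := by simp
  add_mem' := by
    rintro x y ⟨hx1, hx2, hx, hxr⟩ ⟨hy1, hy2, hy, hyr⟩
    simp only [Set.mem_ofPred, Pi.add_apply]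
    refine ⟨by linarith, by linarith, by linarith, ?_⟩
    exact (dvd_add hxr hyr).trans (dvd_of_eq (by ring))

theorem mem_dualConeLattice {u : Fin 3 → ℤ} :
    u ∈ dualConeLattice r a b ↔ 0 ≤ u 1 ∧ 0 ≤ u 2 ∧ 0 ≤ u 0 + (a : ℤ) * u 1 + (b : ℤ) * u 2 ∧
      (r : ℤ) ∣ u 0 + (a : ℤ) * u 1 + (b : ℤ) * u 2 :=
  Iff.rfl

theorem eq_zero_of_mem_dualConeLattice_of_neg_mem {u : Fin 3 → ℤ}
    (hu : u ∈ dualConeLattice r a b) (hnu : -u ∈ dualConeLattice r a b) : u = 0 := by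
  obtain ⟨hu1, hu2, hu, -⟩ := hu
  obtain ⟨hnu1, hnu2, hnu, -⟩ := hnu
  simp only [Pi.neg_apply] at hnu1 hnu2 hnu
  have h1 : u 1 = 0 := by linarith
  have h2 : u 2 = 0 := by linarith
  have h0 : u 0 = 0 := by rw [h1, h2] at hu hnu; linarith
  ext j
  fin_cases j <;> assumption

theorem mem_powersOfX1_iff (hr : 0 < r) {m : Fin 3 → ℤ} :
    m ∈ powersOfX1 r ↔ 0 ≤ m 0 ∧ m 0 < r ∧ m 1 = 0 ∧ m 2 = 0 := by
  constructor
  · rintro ⟨l, hl, rfl⟩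
    simpa using (show l < r by omega)
  · rintro ⟨h0, hr0, h1, h2⟩
    refine ⟨(m 0).toNat, by omega, ?_⟩
    ext j
    fin_cases j <;> simp [h0, h1, h2]

theorem isPrebrick_powersOfX1 (hr : 0 < r) :
    IsPrebrick 3 r ![1, (a : ℤ), (b : ℤ)] (powersOfX1 r) := by
  have hmem : ∀ l : ℕ, l < r → (l : ℤ) • Pi.single (0 : Fin 3) (1 : ℤ) ∈ powersOfX1 r :=
    fun l hl => ⟨l, by omega, rfl⟩
  refine ⟨by simpa using hmem 0 hr, ⟨fun _ _ => trivial, ?_, ?_⟩, ?_, ?_⟩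
  · rintro _ ⟨l, hl, rfl⟩ _ ⟨l', hl', rfl⟩ hw
    rw [wmap_eq_wmap_iff] at hw
    simp only [Pi.smul_apply, Pi.single_apply, smul_eq_mul] at hw
    norm_num at hw
    have : (l' : ℤ) - l = 0 := Int.eq_zero_of_abs_lt_dvd hw (by rw [abs_lt]; omega)
    rw [show l = l' by omega]
  · intro c _
    have : NeZero r := ⟨hr.ne'⟩
    refine ⟨_, hmem c.val c.val_lt, ?_⟩
    simp [wmap, Pi.single_apply]
  · intro γ hγ p q hpq
    rw [mem_powersOfX1_iff hr] at hγ hpq ⊢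
    simp only [Pi.add_apply, natVec] at hpq ⊢
    omega
  · rintro γ ⟨l, hl, rfl⟩
    refine ⟨l, fun t => ((l : ℤ) - t) • Pi.single 0 1, by simp, by simp, ?_, ?_⟩
    · intro t ht
      simpa [Nat.cast_sub ht] using hmem (l - t) (by omega)
    · intro t _
      refine ⟨0, Or.inr ?_⟩
      push_cast
      rw [sub_add_eq_sub_sub, sub_smul, one_smul]

theorem brickGens_subset_dualConeLattice (hr : 0 < r) :
    brickGens 3 r ![1, (a : ℤ), (b : ℤ)] (powersOfX1 r) ⊆ dualConeLattice r a b := by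
  rintro _ ⟨p, γ, hγ, γ', hγ', hw, rfl⟩
  rw [mem_powersOfX1_iff hr] at hγ hγ'
  obtain ⟨hγ0, -, hγ1, hγ2⟩ := hγ
  obtain ⟨-, hγ'0, hγ'1, hγ'2⟩ := hγ'
  rw [wmap_eq_wmap_iff] at hw
  rw [SetLike.mem_coe, mem_dualConeLattice]
  simp only [natVec, Pi.add_apply, Pi.sub_apply, hγ1, hγ2, hγ'1, hγ'2, add_zero, sub_zero,
    mul_zero] at hw ⊢
  have hdvd : (r : ℤ) ∣ p 0 + γ 0 - γ' 0 + a * p 1 + b * p 2 :=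
    (dvd_neg.mpr hw).trans (dvd_of_eq (by ring))
  have ha : 0 ≤ (a : ℤ) * p 1 := by positivity
  have hb : 0 ≤ (b : ℤ) * p 2 := by positivity
  exact ⟨by simp, by simp, Int.nonneg_of_dvd_of_neg_lt hdvd (by linarith), hdvd⟩

theorem SGamma_le_dualConeLattice (hr : 0 < r) :
    SGamma 3 r ![1, (a : ℤ), (b : ℤ)] (powersOfX1 r) ≤ dualConeLattice r a b :=
  AddSubmonoid.closure_le.mpr (brickGens_subset_dualConeLattice a b hr)

theorem natVec_sub_mem_brickGens {p : Fin 3 → ℕ} {c : ℕ} (hc : c < r)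
    (hw : (r : ℤ) ∣ c - (p 0 + a * p 1 + b * p 2)) :
    natVec p - (c : ℤ) • Pi.single 0 1 ∈ brickGens 3 r ![1, (a : ℤ), (b : ℤ)] (powersOfX1 r) :=
  ⟨p, 0, ⟨0, by omega, by simp⟩, _, ⟨c, by omega, rfl⟩,
    by rw [wmap_eq_wmap_iff]; simpa [natVec] using hw, by simp⟩

theorem dualConeLattice_le_SGamma (ha : a < r) (hb : b < r) :
    dualConeLattice r a b ≤ SGamma 3 r ![1, (a : ℤ), (b : ℤ)] (powersOfX1 r) := by
  have hr : (0 : ℤ) < r := by omega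
  have gen_r : ![(r : ℤ), 0, 0] ∈ brickGens 3 r ![1, (a : ℤ), (b : ℤ)] (powersOfX1 r) := by
    convert natVec_sub_mem_brickGens (r := r) a b (p := ![r, 0, 0]) (c := 0) (by omega) (by simp)
    ext j; fin_cases j <;> simp [natVec]
  have gen_a : ![-(a : ℤ), 1, 0] ∈ brickGens 3 r ![1, (a : ℤ), (b : ℤ)] (powersOfX1 r) := by
    convert natVec_sub_mem_brickGens (r := r) a b (p := ![0, 1, 0]) ha (by simp)
    ext j; fin_cases j <;> simp [natVec]
  have gen_b : ![-(b : ℤ), 0, 1] ∈ brickGens 3 r ![1, (a : ℤ), (b : ℤ)] (powersOfX1 r) := by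
    convert natVec_sub_mem_brickGens (r := r) a b (p := ![0, 0, 1]) hb (by simp)
    ext j; fin_cases j <;> simp [natVec]
  rintro u ⟨hu1, hu2, hu, k, hk⟩
  obtain ⟨m, hm⟩ := Int.eq_ofNat_of_zero_le hu1
  obtain ⟨n, hn⟩ := Int.eq_ofNat_of_zero_le hu2
  obtain ⟨l, hl⟩ := Int.eq_ofNat_of_zero_le (nonneg_of_mul_nonneg_right (hk ▸ hu) hr)
  have hu : u = m • ![-(a : ℤ), 1, 0] + n • ![-(b : ℤ), 0, 1] + l • ![(r : ℤ), 0, 0] := by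
    rw [hm, hn, hl] at hk
    ext j
    fin_cases j <;> simp [hm, hn]
    linarith
  rw [hu]
  exact add_mem (add_mem (nsmul_mem (AddSubmonoid.subset_closure gen_a) m)
    (nsmul_mem (AddSubmonoid.subset_closure gen_b) n))
    (nsmul_mem (AddSubmonoid.subset_closure gen_r) l)

variable (r) in
theorem sum_conePoint_mul (s t w : ℚ) (u : Fin 3 → ℤ) :
    ∑ j, (s • (![(1 : ℚ) / r, (a : ℚ) / r, (b : ℚ) / r] : Fin 3 → ℚ) +
        t • (Pi.single (1 : Fin 3) (1 : ℚ) : Fin 3 → ℚ) +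
        w • (Pi.single (2 : Fin 3) (1 : ℚ) : Fin 3 → ℚ)) j * (u j : ℚ) =
      s / r * (u 0 + a * u 1 + b * u 2) + t * u 1 + w * u 2 := by
  simp only [Fin.sum_univ_three, Pi.add_apply, Pi.smul_apply, smul_eq_mul, Pi.single_apply,
    Matrix.cons_val_zero, Matrix.cons_val_one, Matrix.cons_val, Fin.reduceEq, zero_ne_one,
    ↓reduceIte, mul_zero, mul_one, add_zero]
  ring

theorem coe_dualConeLattice (hr : 0 < r) :
    (dualConeLattice r a b : Set (Fin 3 → ℤ)) =
      {u : Fin 3 → ℤ |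
        (r : ℤ) ∣ u 0 + (a : ℤ) * u 1 + (b : ℤ) * u 2 ∧
        ∀ x : Fin 3 → ℚ,
          (∃ s t w : ℚ, 0 ≤ s ∧ 0 ≤ t ∧ 0 ≤ w ∧
            x = s • (![(1 : ℚ) / r, (a : ℚ) / r, (b : ℚ) / r] : Fin 3 → ℚ) +
              t • (Pi.single (1 : Fin 3) (1 : ℚ) : Fin 3 → ℚ) +
              w • (Pi.single (2 : Fin 3) (1 : ℚ) : Fin 3 → ℚ)) →
          0 ≤ ∑ j, x j * (u j : ℚ)} := by
  have hr : (0 : ℚ) < r := by exact_mod_cast hr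
  ext u
  simp only [SetLike.mem_coe, mem_dualConeLattice, Set.mem_ofPred]
  constructor
  · rintro ⟨hu1, hu2, hu, hdvd⟩
    refine ⟨hdvd, ?_⟩
    rintro _ ⟨s, t, w, hs, ht, hw, rfl⟩
    have hu : (0 : ℚ) ≤ u 0 + a * u 1 + b * u 2 := by exact_mod_cast hu
    rw [sum_conePoint_mul]
    have hu1 : (0 : ℚ) ≤ u 1 := by exact_mod_cast hu1
    have hu2 : (0 : ℚ) ≤ u 2 := by exact_mod_cast hu2
    positivity
  · rintro ⟨hdvd, hdual⟩
    have h_at (s t w : ℚ) (hs : 0 ≤ s) (ht : 0 ≤ t) (hw : 0 ≤ w) :=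
      sum_conePoint_mul r a b s t w u ▸ hdual _ ⟨s, t, w, hs, ht, hw, rfl⟩
    have hv := h_at r 0 0 hr.le le_rfl le_rfl
    have hu1 := h_at 0 1 0 le_rfl zero_le_one le_rfl
    have hu2 := h_at 0 0 1 le_rfl le_rfl zero_le_one
    simp only [div_self hr.ne', zero_div, zero_mul, one_mul, zero_add, add_zero] at hv hu1 hu2
    exact ⟨by exact_mod_cast hu1, by exact_mod_cast hu2, by exact_mod_cast hv, hdvd⟩

end CyclicQuotient

theorem stmt_17_general (r a b : ℕ) (hr : 2 ≤ r) (ha2 : a ≤ r - 1)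
    (hb2 : b ≤ r - 1) :
    IsBrick 3 r ![1, (a : ℤ), (b : ℤ)] (powersOfX1 r) ∧
    (SGamma 3 r ![1, (a : ℤ), (b : ℤ)] (powersOfX1 r) : Set (Fin 3 → ℤ)) =
      {u : Fin 3 → ℤ | 0 ≤ u 1 ∧ 0 ≤ u 2 ∧ 0 ≤ u 0 + (a : ℤ) * u 1 + (b : ℤ) * u 2 ∧
        (r : ℤ) ∣ u 0 + (a : ℤ) * u 1 + (b : ℤ) * u 2} ∧
    {u : Fin 3 → ℤ | 0 ≤ u 1 ∧ 0 ≤ u 2 ∧ 0 ≤ u 0 + (a : ℤ) * u 1 + (b : ℤ) * u 2 ∧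
        (r : ℤ) ∣ u 0 + (a : ℤ) * u 1 + (b : ℤ) * u 2} =
      {u : Fin 3 → ℤ |
        (r : ℤ) ∣ u 0 + (a : ℤ) * u 1 + (b : ℤ) * u 2 ∧
        ∀ x : Fin 3 → ℚ,
          (∃ s t w : ℚ, 0 ≤ s ∧ 0 ≤ t ∧ 0 ≤ w ∧
            x = s • (![(1 : ℚ) / r, (a : ℚ) / r, (b : ℚ) / r] : Fin 3 → ℚ) +
              t • (Pi.single (1 : Fin 3) (1 : ℚ) : Fin 3 → ℚ) + w • (Pi.single (2 : Fin 3) (1 : ℚ) : Fin 3 → ℚ)) →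
          0 ≤ ∑ j, x j * (u j : ℚ)} := by
  have hr0 : 0 < r := by omega
  have hS : (SGamma 3 r ![1, (a : ℤ), (b : ℤ)] (powersOfX1 r) : Set (Fin 3 → ℤ)) =
      dualConeLattice r a b :=
    congrArg _ (le_antisymm (SGamma_le_dualConeLattice a b hr0)
      (dualConeLattice_le_SGamma a b (by omega) (by omega)))
  refine ⟨⟨isPrebrick_powersOfX1 a b hr0, fun d hd hnd => ?_⟩, hS,
    coe_dualConeLattice a b hr0⟩
  exact eq_zero_of_mem_dualConeLattice_of_neg_mem a b
    (SGamma_le_dualConeLattice a b hr0 hd)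
    (SGamma_le_dualConeLattice a b hr0 hnd)

/-- For the cyclic group of type `(1/r)(1,a,b)`: the set `Γ` of exponent vectors of
`1, x₁, …, x₁^{r-1}` is a `G`-brick; `S(Γ)` is the explicit set
`{u : u₂ ≥ 0, u₃ ≥ 0, u₁ + a·u₂ + b·u₃ ≥ 0, r ∣ u₁ + a·u₂ + b·u₃}`; and this set equals
`σ₁^∨ ∩ M` for the cone `σ₁ = Cone(v, e₂, e₃)` of the star subdivision at
`v = (1/r)(1,a,b)`, where `M` is the lattice of `G`-invariant (Laurent) monomials. -/
theorem stmt_17 (r a b : ℕ) (hr : 2 ≤ r) (ha1 : 1 ≤ a) (ha2 : a ≤ r - 1)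
    (hb1 : 1 ≤ b) (hb2 : b ≤ r - 1) :
    IsBrick 3 r ![1, (a : ℤ), (b : ℤ)] (powersOfX1 r) ∧
    (SGamma 3 r ![1, (a : ℤ), (b : ℤ)] (powersOfX1 r) : Set (Fin 3 → ℤ)) =
      {u : Fin 3 → ℤ | 0 ≤ u 1 ∧ 0 ≤ u 2 ∧ 0 ≤ u 0 + (a : ℤ) * u 1 + (b : ℤ) * u 2 ∧
        (r : ℤ) ∣ u 0 + (a : ℤ) * u 1 + (b : ℤ) * u 2} ∧
    {u : Fin 3 → ℤ | 0 ≤ u 1 ∧ 0 ≤ u 2 ∧ 0 ≤ u 0 + (a : ℤ) * u 1 + (b : ℤ) * u 2 ∧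
        (r : ℤ) ∣ u 0 + (a : ℤ) * u 1 + (b : ℤ) * u 2} =
      {u : Fin 3 → ℤ |
        (r : ℤ) ∣ u 0 + (a : ℤ) * u 1 + (b : ℤ) * u 2 ∧
        ∀ x : Fin 3 → ℚ,
          (∃ s t w : ℚ, 0 ≤ s ∧ 0 ≤ t ∧ 0 ≤ w ∧
            x = s • (![(1 : ℚ) / r, (a : ℚ) / r, (b : ℚ) / r] : Fin 3 → ℚ) +
              t • (Pi.single (1 : Fin 3) (1 : ℚ) : Fin 3 → ℚ) + w • (Pi.single (2 : Fin 3) (1 : ℚ) : Fin 3 → ℚ)) →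
          0 ≤ ∑ j, x j * (u j : ℚ)} :=
  stmt_17_general r a b hr ha2 hb2
end
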